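/- arXiv:2301.09558 — 11 statements merged into one kernel-verified Lean document; each statement's English description precedes it below -/
import Mathlib

section
/- Let A be a self-adjoint nilpotent endomorphism of an m-dimensional pseudo-Euclidean real vector space (V, ⟨·,·⟩) with A^{m-1} ≠ 0. Then there exists a basis e_1, ..., e_m of V and a sign ε = ±1 such that A e_j = e_{j-1} (with e_0 = 0) and ⟨e_i, e_{m+1-j}⟩ = ε δ_{ij} for all i, j; this basis is unique up to an overall sign change, and ε is unique. In particular the inner product ⟨·,·⟩ is semi-neutral (its positive and negative indices differ by at most one). -/
open Module Finset

private lemma indep_of_dual {V : Type*} [AddCommGroup V] [Module ℝ V] {n : ℕ}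
    (B : V →ₗ[ℝ] V →ₗ[ℝ] ℝ) (g : Fin n → V) (c : Fin n → ℝ) (hc : ∀ j, c j ≠ 0)
    (z : Fin n → V) (h : ∀ i j, B (g i) (z j) = if i = j then c j else 0) :
    LinearIndependent ℝ g := by
  rw [Fintype.linearIndependent_iff]
  intro l hl j
  have h2 := congrArg (fun x => B x (z j)) hl
  simp only [map_sum, map_smul, LinearMap.sum_apply, LinearMap.smul_apply, smul_eq_mul,
    map_zero, LinearMap.zero_apply] at h2
  rw [Finset.sum_eq_single j] at h2
  · rw [h j j, if_pos rfl] at h2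
    exact (mul_eq_zero.mp h2).resolve_right (hc j)
  · intro i _ hij
    rw [h i j, if_neg hij, mul_zero]
  · intro hj; exact absurd (Finset.mem_univ j) hj

private lemma span_of_indep {V : Type*} [AddCommGroup V] [Module ℝ V] [FiniteDimensional ℝ V]
    {n : ℕ} (hn : finrank ℝ V = n) (g : Fin n → V) (hg : LinearIndependent ℝ g) :
    Submodule.span ℝ (Set.range g) = ⊤ := by
  apply Submodule.eq_top_of_finrank_eq
  rw [finrank_span_eq_card hg, Fintype.card_fin, hn]

/-- Normal form for a self-adjoint nilpotent endomorphism `A` with `A^(m-1) ≠ 0` of an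
`m`-dimensional pseudo-Euclidean real vector space `(V, B)`: there is a basis
`e 1, ..., e m` (with the convention `e 0 = 0`) and a sign `ε = ±1` such that
`A (e j) = e (j-1)` and `B (e i) (e (m+1-j)) = ε δ_{ij}`; the basis is unique up to an
overall sign change and `ε` is unique.  Moreover `B` is semi-neutral: it admits an
orthogonal basis with values `±1` on the diagonal, where the numbers of `+1`'s and
`-1`'s differ by at most one. -/
theorem selfAdjoint_nilpotent_normal_form
    (V : Type*) [AddCommGroup V] [Module ℝ V]
    (m : ℕ) (hm : 2 ≤ m) (hdim : finrank ℝ V = m)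
    (B : V →ₗ[ℝ] V →ₗ[ℝ] ℝ)
    (hsymm : ∀ v w, B v w = B w v)
    (hnd : ∀ v, (∀ w, B v w = 0) → v = 0)
    (A : V →ₗ[ℝ] V)
    (hsa : ∀ v w, B (A v) w = B v (A w))
    (hnil : A ^ m = 0) (hne : A ^ (m - 1) ≠ 0) :
    (∃ (e : ℕ → V) (ε : ℝ),
      (ε = 1 ∨ ε = -1) ∧ e 0 = 0 ∧
      (∀ j, 1 ≤ j → j ≤ m → A (e j) = e (j - 1)) ∧
      (∀ i j, 1 ≤ i → i ≤ m → 1 ≤ j → j ≤ m →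
        B (e i) (e (m + 1 - j)) = if i = j then ε else 0) ∧
      LinearIndependent ℝ (fun i : Fin m => e (i.1 + 1)) ∧
      Submodule.span ℝ (Set.range fun i : Fin m => e (i.1 + 1)) = ⊤ ∧
      (∀ (e' : ℕ → V) (ε' : ℝ),
        (ε' = 1 ∨ ε' = -1) → e' 0 = 0 →
        (∀ j, 1 ≤ j → j ≤ m → A (e' j) = e' (j - 1)) →
        (∀ i j, 1 ≤ i → i ≤ m → 1 ≤ j → j ≤ m →
          B (e' i) (e' (m + 1 - j)) = if i = j then ε' else 0) →
        LinearIndependent ℝ (fun i : Fin m => e' (i.1 + 1)) →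
        Submodule.span ℝ (Set.range fun i : Fin m => e' (i.1 + 1)) = ⊤ →
        ε' = ε ∧
          ((∀ j, 1 ≤ j → j ≤ m → e' j = e j) ∨ (∀ j, 1 ≤ j → j ≤ m → e' j = - e j)))) ∧
    (∃ (f : Fin m → V) (pos neg : Finset (Fin m)),
      LinearIndependent ℝ f ∧ Submodule.span ℝ (Set.range f) = ⊤ ∧
      (∀ i j, i ≠ j → B (f i) (f j) = 0) ∧
      Disjoint pos neg ∧ pos ∪ neg = Finset.univ ∧
      (∀ i ∈ pos, B (f i) (f i) = 1) ∧ (∀ i ∈ neg, B (f i) (f i) = -1) ∧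
      |(pos.card : ℤ) - (neg.card : ℤ)| ≤ 1) := by
  haveI hfd : FiniteDimensional ℝ V := FiniteDimensional.of_finrank_pos (by omega)
  -- powers of A kill everything from m on
  have hAk : ∀ k, m ≤ k → (A ^ k : V →ₗ[ℝ] V) = 0 := by
    intro k hk
    have h1 : A ^ k = A ^ m * A ^ (k - m) := by rw [← pow_add]; congr 1; omega
    rw [h1, hnil, zero_mul]
  -- move powers across B
  have hBpow : ∀ (p q : ℕ) (x y : V), B ((A ^ p) x) ((A ^ q) y) = B ((A ^ (p + q)) x) y := by
    intro p q
    induction q generalizing p with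
    | zero => intro x y; simp
    | succ n ih =>
      intro x y
      have h1 : (A ^ (n + 1)) y = (A ^ n) (A y) := by
        rw [pow_succ, Module.End.mul_apply]
      rw [h1, ih p x (A y), ← hsa]
      have h2 : A ((A ^ (p + n)) x) = (A ^ (p + (n + 1))) x := by
        rw [show p + (n + 1) = p + n + 1 by omega, pow_succ', Module.End.mul_apply]
      rw [h2]
  obtain ⟨v, hv⟩ : ∃ v, (A ^ (m - 1)) v ≠ 0 := by
    by_contra h
    push_neg at h
    exact hne (LinearMap.ext fun x => h x)
  -- Krylov independence
  have hKry : LinearIndependent ℝ (fun i : Fin m => (A ^ (i : ℕ)) v) := by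
    rw [Fintype.linearIndependent_iff]
    intro g hg
    have key : ∀ t, ∀ i : Fin m, i.1 = t → g i = 0 := by
      intro t
      induction t using Nat.strong_induction_on with
      | _ t IH =>
        intro i hi
        have h2 := congrArg (A ^ (m - 1 - t)) hg
        rw [map_sum, map_zero] at h2
        rw [Finset.sum_eq_single i] at h2
        · rw [map_smul] at h2
          have h3 : (A ^ (m - 1 - t)) ((A ^ (i : ℕ)) v) = (A ^ (m - 1)) v := by
            rw [← Module.End.mul_apply, ← pow_add]
            congr 2
            have := i.2
            omega
          rw [h3] at h2
          exact (smul_eq_zero.mp h2).resolve_right hv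
        · intro j _ hj
          rw [map_smul]
          have hjt : (j : ℕ) ≠ t := by
            intro h
            exact hj (Fin.ext (h.trans hi.symm))
          rcases lt_or_gt_of_ne hjt with h | h
          · rw [IH _ h j rfl, zero_smul]
          · have h4 : (A ^ (m - 1 - t)) ((A ^ (j : ℕ)) v) = 0 := by
              rw [← Module.End.mul_apply, ← pow_add]
              have := i.2
              rw [hAk (m - 1 - t + j) (by omega)]
              rfl
            rw [h4, smul_zero]
        · intro h; exact absurd (Finset.mem_univ i) h
    exact fun i => key i.1 i rfl
  have hKspan : Submodule.span ℝ (Set.range fun i : Fin m => (A ^ (i : ℕ)) v) = ⊤ :=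
    span_of_indep hdim _ hKry
  have hck : ∀ k, m ≤ k → B ((A ^ k) v) v = 0 := by
    intro k hk
    rw [hAk k hk]
    simp
  have hcm : B ((A ^ (m - 1)) v) v ≠ 0 := by
    intro h0
    apply hv
    apply hnd
    intro w
    have hw : w ∈ Submodule.span ℝ (Set.range fun i : Fin m => (A ^ (i : ℕ)) v) := by
      rw [hKspan]; trivial
    induction hw using Submodule.span_induction with
    | mem x hx =>
      obtain ⟨i, rfl⟩ := hx
      rw [hBpow]
      rcases Nat.eq_zero_or_pos (i : ℕ) with h | h
      · rw [h]
        simpa using h0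
      · exact hck _ (by omega)
    | zero => simp
    | add x y _ _ hx hy => rw [map_add, hx, hy, add_zero]
    | smul a x _ hx => rw [map_smul, hx, smul_zero]
  -- iterative normalization
  have key : ∀ t, t ≤ m - 1 → ∃ w : V, B ((A ^ (m - 1)) w) w ≠ 0 ∧
      ∀ k, m - 1 - t ≤ k → k ≤ m - 2 → B ((A ^ k) w) w = 0 := by
    intro t
    induction t with
    | zero => exact fun _ => ⟨v, hcm, fun k hk1 hk2 => by omega⟩
    | succ t IH =>
      intro ht
      obtain ⟨w, hw1, hw2⟩ := IH (by omega)
      set β : ℝ := -(B ((A ^ (m - 2 - t)) w) w) / (2 * B ((A ^ (m - 1)) w) w) with hβ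
      have hexp : ∀ k, B ((A ^ k) (w + β • (A ^ (t + 1)) w)) (w + β • (A ^ (t + 1)) w)
          = B ((A ^ k) w) w + 2 * β * B ((A ^ (k + (t + 1))) w) w
            + β ^ 2 * B ((A ^ (k + 2 * (t + 1))) w) w := by
        intro k
        have hk1 : (A ^ k) ((A ^ (t + 1)) w) = (A ^ (k + (t + 1))) w := by
          rw [← Module.End.mul_apply, ← pow_add]
        have hk2 : B ((A ^ k) w) ((A ^ (t + 1)) w) = B ((A ^ (k + (t + 1))) w) w :=
          hBpow k (t + 1) w w
        have hk3 : B ((A ^ (k + (t + 1))) w) ((A ^ (t + 1)) w)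
            = B ((A ^ (k + 2 * (t + 1))) w) w := by
          rw [hBpow, show k + (t + 1) + (t + 1) = k + 2 * (t + 1) by omega]
        simp only [map_add, map_smul, LinearMap.add_apply, LinearMap.smul_apply,
          smul_eq_mul, hk1, hk2, hk3]
        ring
      have hz : ∀ N, m ≤ N → B ((A ^ N) w) w = 0 := by
        intro N hN
        rw [hAk N hN]
        simp
      refine ⟨w + β • (A ^ (t + 1)) w, ?_, ?_⟩
      · rw [hexp (m - 1), hz (m - 1 + (t + 1)) (by omega), hz (m - 1 + 2 * (t + 1)) (by omega)]
        simpa using hw1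
      · intro k hk1 hk2
        rw [hexp k]
        by_cases hk : k = m - 2 - t
        · subst hk
          rw [hz (m - 2 - t + 2 * (t + 1)) (by omega)]
          rw [show m - 2 - t + (t + 1) = m - 1 by omega, hβ]
          field_simp
          ring
        · rw [hw2 k (by omega) hk2, hz (k + (t + 1)) (by omega), hz (k + 2 * (t + 1)) (by omega)]
          ring
  obtain ⟨w0, hw01, hw02⟩ := key (m - 1) le_rfl
  set d : ℝ := B ((A ^ (m - 1)) w0) w0 with hd
  set ε : ℝ := if 0 < d then (1 : ℝ) else -1 with hεdef
  have hεpm : ε = 1 ∨ ε = -1 := by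
    rw [hεdef]
    split_ifs <;> simp
  have hεne : ε ≠ 0 := by rcases hεpm with h | h <;> rw [h] <;> norm_num
  set r : ℝ := (Real.sqrt |d|)⁻¹ with hr
  set w : V := r • w0 with hwdef
  have hrr : r * r * d = ε := by
    have h1 : Real.sqrt |d| * Real.sqrt |d| = |d| := Real.mul_self_sqrt (abs_nonneg d)
    have h2 : r * r = |d|⁻¹ := by rw [hr, ← mul_inv, h1]
    rw [h2, hεdef]
    rcases lt_trichotomy d 0 with h | h | h
    · rw [if_neg (by linarith), abs_of_neg h]
      field_simp
    · exact absurd h hw01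
    · rw [if_pos h, abs_of_pos h]
      field_simp
  have hDw : ∀ k, B ((A ^ k) w) w = r * r * B ((A ^ k) w0) w0 := by
    intro k
    rw [hwdef]
    simp only [map_smul, LinearMap.smul_apply, smul_eq_mul]
    ring
  have hDm : B ((A ^ (m - 1)) w) w = ε := by rw [hDw, ← hd, hrr]
  have hD0 : ∀ k, k ≤ m - 2 → B ((A ^ k) w) w = 0 := by
    intro k hk
    rw [hDw, hw02 k (by omega) hk, mul_zero]
  have hDbig : ∀ k, m ≤ k → B ((A ^ k) w) w = 0 := by
    intro k hk
    rw [hAk k hk]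
    simp
  -- the basis
  set e : ℕ → V := fun j => if j = 0 then (0 : V) else (A ^ (m - j)) w with he
  have he0 : e 0 = 0 := by simp [he]
  have hej : ∀ j, 1 ≤ j → e j = (A ^ (m - j)) w := by
    intro j hj
    simp only [he, if_neg (by omega : ¬ j = 0)]
  have estep : ∀ j, 1 ≤ j → j ≤ m → A (e j) = e (j - 1) := by
    intro j h1 h2
    rw [hej j h1]
    have h3 : A ((A ^ (m - j)) w) = (A ^ (m - j + 1)) w := by
      rw [pow_succ', Module.End.mul_apply]
    rw [h3]
    by_cases hj : j = 1
    · subst hj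
      rw [show m - 1 + 1 = m by omega, hAk m le_rfl]
      simp [he0]
    · rw [hej (j - 1) (by omega), show m - j + 1 = m - (j - 1) by omega]
  have Gram : ∀ i j, 1 ≤ i → i ≤ m → 1 ≤ j → j ≤ m →
      B (e i) (e (m + 1 - j)) = if i = j then ε else 0 := by
    intro i j hi1 hi2 hj1 hj2
    rw [hej i hi1, hej (m + 1 - j) (by omega), show m - (m + 1 - j) = j - 1 by omega, hBpow]
    by_cases hij : i = j
    · rw [if_pos hij, show m - i + (j - 1) = m - 1 by omega, hDm]
    · rw [if_neg hij]
      rcases lt_or_gt_of_ne hij with h | h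
      · exact hDbig _ (by omega)
      · exact hD0 _ (by omega)
  have hdual : ∀ i j : Fin m, B (e (i.1 + 1)) (e (m - j.1)) = if i = j then ε else 0 := by
    intro i j
    have h1 := Gram (i.1 + 1) (j.1 + 1) (by omega) (by omega) (by omega) (by omega)
    rw [show m + 1 - (j.1 + 1) = m - j.1 by omega] at h1
    rw [h1]
    by_cases h : i = j
    · rw [if_pos h, if_pos (by rw [h])]
    · rw [if_neg h, if_neg (fun hc => h (Fin.ext (by omega)))]
  have hind : LinearIndependent ℝ (fun i : Fin m => e (i.1 + 1)) :=
    indep_of_dual B _ (fun _ => ε) (fun _ => hεne) (fun j : Fin m => e (m - j.1)) hdual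
  have hspan : Submodule.span ℝ (Set.range fun i : Fin m => e (i.1 + 1)) = ⊤ :=
    span_of_indep hdim _ hind
  have hAe : ∀ s t, s ≤ m → (A ^ t) (e s) = if t < s then e (s - t) else 0 := by
    intro s t hs
    induction t with
    | zero =>
      rcases Nat.eq_zero_or_pos s with h | h
      · subst h
        simp [he0]
      · rw [if_pos h]
        simp
    | succ t IH =>
      rw [pow_succ', Module.End.mul_apply, IH]
      by_cases h : t < s
      · rw [if_pos h, estep (s - t) (by omega) (by omega)]
        by_cases h2 : t + 1 < s
        · rw [if_pos h2, show s - t - 1 = s - (t + 1) by omega]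
        · rw [if_neg h2, show s - t - 1 = 0 by omega, he0]
      · rw [if_neg h, map_zero, if_neg (by omega)]
  have Bee : ∀ a b, 1 ≤ a → a ≤ m → 1 ≤ b → b ≤ m →
      B (e a) (e b) = if a + b = m + 1 then ε else 0 := by
    intro a b ha1 ha2 hb1 hb2
    have h1 := Gram a (m + 1 - b) ha1 ha2 (by omega) (by omega)
    rw [show m + 1 - (m + 1 - b) = b by omega] at h1
    rw [h1]
    by_cases h : a + b = m + 1
    · rw [if_pos h, if_pos (by omega)]
    · rw [if_neg h, if_neg (by omega)]
  constructor
  · refine ⟨e, ε, hεpm, he0, estep, Gram, hind, hspan, ?_⟩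
    intro e' ε' hε' he'0 hstep' hGram' hind' hspan'
    have hpow' : ∀ t, t ≤ m - 1 → (A ^ t) (e' m) = e' (m - t) := by
      intro t ht
      induction t with
      | zero => simp
      | succ t IH =>
        rw [pow_succ', Module.End.mul_apply, IH (by omega),
          hstep' (m - t) (by omega) (by omega), show m - t - 1 = m - (t + 1) by omega]
    have hmem : e' m ∈ Submodule.span ℝ (Set.range fun i : Fin m => e (i.1 + 1)) := by
      rw [hspan]; trivial
    rw [Submodule.mem_span_range_iff_exists_fun] at hmem
    obtain ⟨bf, hbf⟩ := hmem
    set b' : ℕ → ℝ := fun s => if h : s < m then bf ⟨s, h⟩ else 0 with hb'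
    have hexp2 : (∑ s ∈ Finset.range m, b' s • e (s + 1)) = e' m := by
      rw [← hbf, ← Fin.sum_univ_eq_sum_range (fun s => b' s • e (s + 1)) m]
      apply Finset.sum_congr rfl
      intro i _
      simp [hb', i.2]
    have hγ : ∀ u, 1 ≤ u → u ≤ m → B (e u) (e' m) = ε * b' (m - u) := by
      intro u hu1 hu2
      rw [← hexp2, map_sum]
      rw [Finset.sum_eq_single (m - u)]
      · rw [map_smul, smul_eq_mul, Bee u (m - u + 1) hu1 hu2 (by omega) (by omega),
          if_pos (by omega)]
        ring
      · intro s hs hsne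
        have hsm := Finset.mem_range.mp hs
        rw [map_smul, smul_eq_mul, Bee u (s + 1) hu1 hu2 (by omega) (by omega),
          if_neg (by omega), mul_zero]
      · intro h
        exact absurd (Finset.mem_range.mpr (by omega)) h
    have hmain : ∀ i, 1 ≤ i → i ≤ m →
        (∑ s ∈ Finset.range m,
          (if m - i ≤ s then b' s * (ε * b' (2 * m - i - s - 1)) else 0))
          = if i = 1 then ε' else 0 := by
      intro i hi1 hi2
      have h1 := hGram' i 1 hi1 hi2 (by omega) (by omega)
      rw [show m + 1 - 1 = m by omega] at h1
      rw [← h1]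
      have h2 : e' i = (A ^ (m - i)) (e' m) := by
        rw [hpow' (m - i) (by omega), show m - (m - i) = i by omega]
      rw [h2]
      nth_rewrite 1 [← hexp2]
      simp only [map_sum, map_smul, LinearMap.sum_apply, LinearMap.smul_apply, smul_eq_mul]
      apply Finset.sum_congr rfl
      intro s hs
      have hsm := Finset.mem_range.mp hs
      rw [hAe (s + 1) (m - i) (by omega)]
      by_cases h3 : m - i ≤ s
      · rw [if_pos (by omega : m - i < s + 1), if_pos h3,
          hγ (s + 1 - (m - i)) (by omega) (by omega),
          show m - (s + 1 - (m - i)) = 2 * m - i - s - 1 by omega]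
      · rw [if_neg (by omega : ¬ m - i < s + 1), if_neg h3]
        simp
    have hA1 := hmain 1 le_rfl (by omega)
    rw [if_pos rfl] at hA1
    have hsingle : (∑ s ∈ Finset.range m,
        (if m - 1 ≤ s then b' s * (ε * b' (2 * m - 1 - s - 1)) else 0))
        = b' (m - 1) * (ε * b' (m - 1)) := by
      rw [Finset.sum_eq_single_of_mem (m - 1) (Finset.mem_range.mpr (by omega))]
      · rw [if_pos (by omega), show 2 * m - 1 - (m - 1) - 1 = m - 1 by omega]
      · intro s hs hne2
        have hsm := Finset.mem_range.mp hs
        rw [if_neg (by omega)]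
    have hA : b' (m - 1) * (ε * b' (m - 1)) = ε' := hsingle.symm.trans hA1
    have hεε' : ε' = ε := by
      rcases hεpm with h | h <;> rcases hε' with h' | h'
      · rw [h, h']
      · exfalso; rw [h, h'] at hA; nlinarith [mul_self_nonneg (b' (m - 1))]
      · exfalso; rw [h, h'] at hA; nlinarith [mul_self_nonneg (b' (m - 1))]
      · rw [h, h']
    have hb2 : b' (m - 1) * b' (m - 1) = 1 := by
      rcases hεpm with h | h
      · rw [hεε', h] at hA; linear_combination hA
      · rw [hεε', h] at hA; linear_combination -hA
    have hbm := mul_self_eq_one_iff.mp hb2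
    have hbne : b' (m - 1) ≠ 0 := by rcases hbm with h | h <;> rw [h] <;> norm_num
    have hz2 : ∀ t, 1 ≤ t → t ≤ m - 1 → b' (m - 1 - t) = 0 := by
      intro t
      induction t using Nat.strong_induction_on with
      | _ t IH =>
        intro ht1 ht2
        have h2 := hmain (t + 1) (by omega) (by omega)
        rw [if_neg (by omega)] at h2
        have hsub : ({m - 1 - t, m - 1} : Finset ℕ) ⊆ Finset.range m := by
          intro x hx
          rw [Finset.mem_insert, Finset.mem_singleton] at hx
          rw [Finset.mem_range]
          omega
        have hvan : ∀ x ∈ Finset.range m, x ∉ ({m - 1 - t, m - 1} : Finset ℕ) →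
            (if m - (t + 1) ≤ x then b' x * (ε * b' (2 * m - (t + 1) - x - 1)) else 0) = 0 := by
          intro x hx hnx
          have hxm := Finset.mem_range.mp hx
          rw [Finset.mem_insert, Finset.mem_singleton] at hnx
          push_neg at hnx
          by_cases h5 : m - (t + 1) ≤ x
          · rw [if_pos h5]
            have h6 : b' x = 0 := by
              have h7 := IH (m - 1 - x) (by omega) (by omega) (by omega)
              rwa [show m - 1 - (m - 1 - x) = x by omega] at h7
            rw [h6, zero_mul]
          · rw [if_neg h5]
        rw [← Finset.sum_subset hsub hvan,
          Finset.sum_pair (by omega : m - 1 - t ≠ m - 1),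
          if_pos (by omega), if_pos (by omega),
          show 2 * m - (t + 1) - (m - 1 - t) - 1 = m - 1 by omega,
          show 2 * m - (t + 1) - (m - 1) - 1 = m - 1 - t by omega] at h2
        have h3 : (2 * (ε * b' (m - 1))) * b' (m - 1 - t) = 0 := by linear_combination h2
        rcases mul_eq_zero.mp h3 with h4 | h4
        · exact absurd h4 (mul_ne_zero two_ne_zero (mul_ne_zero hεne hbne))
        · exact h4
    refine ⟨hεε', ?_⟩
    have hem : e' m = b' (m - 1) • e m := by
      rw [← hexp2]
      rw [Finset.sum_eq_single_of_mem (m - 1) (Finset.mem_range.mpr (by omega))]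
      · rw [show m - 1 + 1 = m by omega]
      · intro s hs hne2
        have hsm := Finset.mem_range.mp hs
        have h6 : b' s = 0 := by
          have h7 := hz2 (m - 1 - s) (by omega) (by omega)
          rwa [show m - 1 - (m - 1 - s) = s by omega] at h7
        rw [h6, zero_smul]
    have hej' : ∀ j, 1 ≤ j → j ≤ m → e' j = b' (m - 1) • e j := by
      intro j h1 h2
      have h3 := hpow' (m - j) (by omega)
      rw [show m - (m - j) = j by omega] at h3
      rw [← h3, hem, map_smul]
      congr 1
      rw [hAe m (m - j) le_rfl, if_pos (by omega), show m - (m - j) = j by omega]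
    rcases hbm with h | h
    · left
      intro j hj1 hj2
      rw [hej' j hj1 hj2, h, one_smul]
    · right
      intro j hj1 hj2
      rw [hej' j hj1 hj2, h, neg_one_smul]
  · -- semi-neutrality
    set R : ℝ := (Real.sqrt 2)⁻¹ with hR
    have hR2 : R * R = 2⁻¹ := by
      rw [hR, ← mul_inv, Real.mul_self_sqrt (by norm_num)]
    set p : Fin m → ℝ := fun i => if 2 * i.1 + 2 ≤ m then R
      else if 2 * i.1 + 1 = m then (2⁻¹ : ℝ) else -R with hp
    set q : Fin m → ℝ := fun i => if 2 * i.1 + 1 = m then (2⁻¹ : ℝ) else R with hq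
    set f : Fin m → V := fun i => p i • e (i.1 + 1) + q i • e (m - i.1) with hf
    set sg : Fin m → ℝ := fun i => if 2 * i.1 + 1 ≤ m then ε else -ε with hsg
    have hsgpm : ∀ i, sg i = 1 ∨ sg i = -1 := by
      intro i
      simp only [hsg]
      split_ifs
      · exact hεpm
      · rcases hεpm with h | h <;> rw [h] <;> norm_num
    have hsgne : ∀ i, sg i ≠ 0 := by
      intro i
      rcases hsgpm i with h | h <;> rw [h] <;> norm_num
    have hBf : ∀ i j : Fin m, B (f i) (f j) = if i = j then sg i else 0 := by
      intro i j
      have hia := i.2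
      have hja := j.2
      have h1 := Bee (i.1 + 1) (j.1 + 1) (by omega) (by omega) (by omega) (by omega)
      have h2 := Bee (i.1 + 1) (m - j.1) (by omega) (by omega) (by omega) (by omega)
      have h3 := Bee (m - i.1) (j.1 + 1) (by omega) (by omega) (by omega) (by omega)
      have h4 := Bee (m - i.1) (m - j.1) (by omega) (by omega) (by omega) (by omega)
      have hexpand : B (f i) (f j) = p i * p j * B (e (i.1 + 1)) (e (j.1 + 1))
          + p i * q j * B (e (i.1 + 1)) (e (m - j.1))
          + q i * p j * B (e (m - i.1)) (e (j.1 + 1))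
          + q i * q j * B (e (m - i.1)) (e (m - j.1)) := by
        simp only [hf, map_add, map_smul, LinearMap.add_apply, LinearMap.smul_apply,
          smul_eq_mul]
        ring
      rw [hexpand, h1, h2, h3, h4]
      by_cases hij : i = j
      · subst hij
        rw [if_pos rfl, if_pos (by omega : i.1 + 1 + (m - i.1) = m + 1),
          if_pos (by omega : m - i.1 + (i.1 + 1) = m + 1)]
        simp only [hp, hq, hsg]
        by_cases hz1 : 2 * i.1 + 2 ≤ m
        · rw [if_pos hz1, if_neg (by omega : ¬ 2 * i.1 + 1 = m),
            if_neg (by omega : ¬ i.1 + 1 + (i.1 + 1) = m + 1),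
            if_neg (by omega : ¬ m - i.1 + (m - i.1) = m + 1),
            if_pos (by omega : 2 * i.1 + 1 ≤ m)]
          linear_combination (2 * ε) * hR2
        · by_cases hz2 : 2 * i.1 + 1 = m
          · rw [if_neg hz1, if_pos hz2, if_pos hz2,
              if_pos (by omega : i.1 + 1 + (i.1 + 1) = m + 1),
              if_pos (by omega : m - i.1 + (m - i.1) = m + 1),
              if_pos (by omega : 2 * i.1 + 1 ≤ m)]
            ring
          · rw [if_neg hz1, if_neg hz2, if_neg hz2,
              if_neg (by omega : ¬ i.1 + 1 + (i.1 + 1) = m + 1),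
              if_neg (by omega : ¬ m - i.1 + (m - i.1) = m + 1),
              if_neg (by omega : ¬ 2 * i.1 + 1 ≤ m)]
            linear_combination (-2 * ε) * hR2
      · rw [if_neg hij]
        have hijv : i.1 ≠ j.1 := fun h => hij (Fin.ext h)
        rw [if_neg (by omega : ¬ i.1 + 1 + (m - j.1) = m + 1),
          if_neg (by omega : ¬ m - i.1 + (j.1 + 1) = m + 1)]
        by_cases hpart : i.1 + j.1 + 1 = m
        · rw [if_pos (by omega : i.1 + 1 + (j.1 + 1) = m + 1),
            if_pos (by omega : m - i.1 + (m - j.1) = m + 1)]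
          simp only [hp, hq]
          rcases Nat.lt_or_ge i.1 j.1 with hlt | hge
          · rw [if_pos (by omega : 2 * i.1 + 2 ≤ m),
              if_neg (by omega : ¬ 2 * i.1 + 1 = m),
              if_neg (by omega : ¬ 2 * j.1 + 2 ≤ m),
              if_neg (by omega : ¬ 2 * j.1 + 1 = m),
              if_neg (by omega : ¬ 2 * j.1 + 1 = m)]
            ring
          · rw [if_neg (by omega : ¬ 2 * i.1 + 2 ≤ m),
              if_neg (by omega : ¬ 2 * i.1 + 1 = m),
              if_neg (by omega : ¬ 2 * i.1 + 1 = m),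
              if_pos (by omega : 2 * j.1 + 2 ≤ m),
              if_neg (by omega : ¬ 2 * j.1 + 1 = m)]
            ring
        · rw [if_neg (by omega : ¬ i.1 + 1 + (j.1 + 1) = m + 1),
            if_neg (by omega : ¬ m - i.1 + (m - j.1) = m + 1)]
          ring
    have hdualf : ∀ i j : Fin m, B (f i) (f j) = if i = j then sg j else 0 := by
      intro i j
      rw [hBf]
      by_cases h : i = j
      · rw [if_pos h, if_pos h, h]
      · rw [if_neg h, if_neg h]
    have hindf : LinearIndependent ℝ f := indep_of_dual B f sg hsgne f hdualf
    have hspanf : Submodule.span ℝ (Set.range f) = ⊤ := span_of_indep hdim f hindf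
    refine ⟨f, Finset.univ.filter (fun i => sg i = 1),
      Finset.univ.filter (fun i => sg i = -1), hindf, hspanf, ?_, ?_, ?_, ?_, ?_, ?_⟩
    · intro i j hij
      rw [hBf, if_neg hij]
    · rw [Finset.disjoint_left]
      intro a ha hb
      rw [Finset.mem_filter] at ha hb
      rw [ha.2] at hb
      norm_num at hb
    · ext a
      simp only [Finset.mem_union, Finset.mem_filter, Finset.mem_univ, true_and, iff_true]
      exact hsgpm a
    · intro i hi
      rw [hBf, if_pos rfl]
      exact (Finset.mem_filter.mp hi).2
    · intro i hi
      rw [hBf, if_pos rfl]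
      exact (Finset.mem_filter.mp hi).2
    · have hcl : (Finset.univ.filter (fun i : Fin m => 2 * i.1 + 1 ≤ m)).card
          = (m + 1) / 2 := by
        rw [Finset.card_filter]
        rw [Fin.sum_univ_eq_sum_range (fun s => if 2 * s + 1 ≤ m then 1 else 0) m]
        rw [← Finset.card_filter]
        rw [show (Finset.range m).filter (fun s => 2 * s + 1 ≤ m)
            = Finset.range ((m + 1) / 2) by
          ext x
          simp only [Finset.mem_filter, Finset.mem_range]
          omega]
        rw [Finset.card_range]
      have hdisj : Disjoint (Finset.univ.filter (fun i : Fin m => sg i = 1))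
          (Finset.univ.filter (fun i : Fin m => sg i = -1)) := by
        rw [Finset.disjoint_left]
        intro a ha hb
        rw [Finset.mem_filter] at ha hb
        rw [ha.2] at hb
        norm_num at hb
      have hun : (Finset.univ.filter (fun i : Fin m => sg i = 1))
          ∪ (Finset.univ.filter (fun i : Fin m => sg i = -1)) = Finset.univ := by
        ext a
        simp only [Finset.mem_union, Finset.mem_filter, Finset.mem_univ, true_and, iff_true]
        exact hsgpm a
      have hcards : (Finset.univ.filter (fun i : Fin m => sg i = 1)).card
          + (Finset.univ.filter (fun i : Fin m => sg i = -1)).card = m := by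
        rw [← Finset.card_union_of_disjoint hdisj, hun, Finset.card_univ, Fintype.card_fin]
      rcases hεpm with hε1 | hε1
      · have hpos : (Finset.univ.filter (fun i : Fin m => sg i = 1))
            = Finset.univ.filter (fun i : Fin m => 2 * i.1 + 1 ≤ m) := by
          ext i
          simp only [Finset.mem_filter, Finset.mem_univ, true_and, hsg, hε1]
          split_ifs with h
          · simp [h]
          · norm_num
            omega
        rw [abs_le]
        constructor <;>
          [ (have h1 := hcards; rw [hpos, hcl] at h1 ⊢; omega);
            (have h1 := hcards; rw [hpos, hcl] at h1 ⊢; omega)]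
      · have hneg : (Finset.univ.filter (fun i : Fin m => sg i = -1))
            = Finset.univ.filter (fun i : Fin m => 2 * i.1 + 1 ≤ m) := by
          ext i
          simp only [Finset.mem_filter, Finset.mem_univ, true_and, hsg, hε1]
          split_ifs with h
          · simp [h]
          · norm_num
            omega
        rw [abs_le]
        constructor <;>
          [ (have h1 := hcards; rw [hneg, hcl] at h1 ⊢; omega);
            (have h1 := hcards; rw [hneg, hcl] at h1 ⊢; omega)]
end

section
/- Let A be a self-adjoint nilpotent endomorphism of an m-dimensional pseudo-Euclidean space (V, ⟨·,·⟩) with A^{m-1} ≠ 0. Then the only linear isometries of (V, ⟨·,·⟩) commuting with A are the identity and its negative. -/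
open Module

/-- For a self-adjoint nilpotent endomorphism `A` with `A^(m-1) ≠ 0` of an
`m`-dimensional pseudo-Euclidean space `(V, B)`, the only linear isometries of `(V, B)`
commuting with `A` are `Id` and `-Id`. -/
theorem isometries_commuting_with_generic_nilpotent
    (V : Type*) [AddCommGroup V] [Module ℝ V]
    (m : ℕ) (hm : 2 ≤ m) (hdim : finrank ℝ V = m)
    (B : V →ₗ[ℝ] V →ₗ[ℝ] ℝ)
    (hsymm : ∀ v w, B v w = B w v)
    (hnd : ∀ v, (∀ w, B v w = 0) → v = 0)
    (A : V →ₗ[ℝ] V)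
    (hsa : ∀ v w, B (A v) w = B v (A w))
    (hnil : A ^ m = 0) (hne : A ^ (m - 1) ≠ 0)
    (C : V →ₗ[ℝ] V) (hbij : Function.Bijective C)
    (hiso : ∀ v w, B (C v) (C w) = B v w)
    (hcomm : C ∘ₗ A = A ∘ₗ C) :
    C = LinearMap.id ∨ C = - LinearMap.id := by
  haveI : NeZero m := ⟨by omega⟩
  have hfd : FiniteDimensional ℝ V := FiniteDimensional.of_finrank_pos (by rw [hdim]; omega)
  -- A^k = 0 for k ≥ m
  have hAk : ∀ k, m ≤ k → (A ^ k : V →ₗ[ℝ] V) = 0 := by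
    intro k hk
    rw [show k = m + (k - m) by omega, pow_add, hnil, zero_mul]
  -- pick v with A^(m-1) v ≠ 0
  obtain ⟨v, hv⟩ : ∃ v, (A ^ (m - 1)) v ≠ 0 := by
    by_contra h
    push_neg at h
    exact hne (LinearMap.ext fun w => h w)
  -- linear independence of v, Av, ..., A^{m-1} v
  have li : LinearIndependent ℝ (fun i : Fin m => (A ^ (i : ℕ)) v) := by
    rw [Fintype.linearIndependent_iff]
    intro g hg
    have key : ∀ k : ℕ, ∀ i : Fin m, (i : ℕ) = k → g i = 0 := by
      intro k
      induction k using Nat.strong_induction_on with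
      | _ k ih =>
        intro i hi
        have hkm : k < m := hi ▸ i.2
        have h1 : (A ^ (m - 1 - k)) (∑ j, g j • (A ^ (j : ℕ)) v) = 0 := by
          rw [hg, map_zero]
        rw [map_sum] at h1
        have h2 : ∀ j : Fin m, (A ^ (m - 1 - k)) (g j • (A ^ (j : ℕ)) v)
            = g j • (A ^ (m - 1 - k + (j : ℕ))) v := by
          intro j
          rw [map_smul, ← Module.End.mul_apply, ← pow_add]
        have h3 : ∑ j, g j • (A ^ (m - 1 - k + (j : ℕ))) v = 0 := by
          rw [← h1]; exact Finset.sum_congr rfl fun j _ => (h2 j).symm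
        have h4 : ∑ j, g j • (A ^ (m - 1 - k + (j : ℕ))) v
            = g i • (A ^ (m - 1)) v := by
          rw [Finset.sum_eq_single i]
          · rw [show m - 1 - k + (i : ℕ) = m - 1 by omega]
          · intro j _ hj
            rcases lt_or_gt_of_ne (fun hjk : (j : ℕ) = k => hj (Fin.ext (by omega))) with hlt | hgt
            · rw [ih _ hlt j rfl, zero_smul]
            · have : (A ^ (m - 1 - k + (j : ℕ)) : V →ₗ[ℝ] V) = 0 := hAk _ (by omega)
              rw [this]; simp
          · intro h; exact absurd (Finset.mem_univ i) h
        rw [h4] at h3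
        rcases smul_eq_zero.mp h3 with h | h
        · exact h
        · exact absurd h hv
    exact fun i => key i i rfl
  -- basis
  haveI : Nonempty (Fin m) := ⟨⟨0, by omega⟩⟩
  have hcard : Fintype.card (Fin m) = finrank ℝ V := by simp [hdim]
  let b : Basis (Fin m) ℝ V := basisOfLinearIndependentOfCardEqFinrank li hcard
  have hb : ∀ i, b i = (A ^ (i : ℕ)) v := fun i =>
    congrFun (coe_basisOfLinearIndependentOfCardEqFinrank li hcard) i
  -- coefficients of C v
  set c : Fin m → ℝ := fun i => b.repr (C v) i with hc
  have hCv : C v = ∑ i, c i • (A ^ (i : ℕ)) v := by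
    conv_lhs => rw [← b.sum_repr (C v)]
    exact Finset.sum_congr rfl fun i _ => by rw [hb]
  -- C commutes with powers of A
  have hCA : Commute A C := by
    have : C * A = A * C := by
      ext w; exact congrFun (congrArg DFunLike.coe hcomm) w
    exact this.symm
  -- P = polynomial in A equal to C
  set P : V →ₗ[ℝ] V := ∑ i, c i • A ^ (i : ℕ) with hP
  have hCP : C = P := by
    apply b.ext
    intro j
    rw [hb]
    have h1 : C ((A ^ (j : ℕ)) v) = (A ^ (j : ℕ)) (C v) := by
      rw [← Module.End.mul_apply, ← Module.End.mul_apply, (hCA.pow_left (j : ℕ)).eq]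
    rw [h1, hCv, map_sum, hP]
    rw [LinearMap.sum_apply]
    refine Finset.sum_congr rfl fun i _ => ?_
    rw [map_smul, LinearMap.smul_apply, ← Module.End.mul_apply, ← Module.End.mul_apply,
      ← pow_add, ← pow_add, add_comm]
  -- powers of A are self-adjoint
  have hsaPow : ∀ k : ℕ, ∀ u w, B ((A ^ k) u) w = B u ((A ^ k) w) := by
    intro k
    induction k with
    | zero => intro u w; simp
    | succ n ihn =>
      intro u w
      rw [pow_succ, Module.End.mul_apply, Module.End.mul_apply, ihn, hsa]
      congr 1
      rw [← Module.End.mul_apply, ← Module.End.mul_apply, ← pow_succ, ← pow_succ']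
  -- C is self-adjoint
  have hCsa : ∀ u w, B (C u) w = B u (C w) := by
    intro u w
    rw [hCP, hP]
    simp only [LinearMap.sum_apply, LinearMap.smul_apply, map_sum, LinearMap.smul_apply,
      LinearMap.map_smul, LinearMap.smul_apply]
    refine Finset.sum_congr rfl fun i _ => ?_
    rw [hsaPow]
  -- C^2 = 1
  have hC2 : C * C = 1 := by
    ext w
    have : ∀ u, B (C (C w) - w) u = 0 := by
      intro u
      have e1 : B (C (C w)) u = B w u := by rw [hCsa (C w) u, hiso]
      rw [map_sub, LinearMap.sub_apply, e1, sub_self]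
    have := hnd _ this
    rw [Module.End.mul_apply, Module.End.one_apply]
    exact sub_eq_zero.mp this
  -- decompose C = c0 • 1 + N
  set c0 : ℝ := c 0 with hc0
  clear_value c0
  set N : V →ₗ[ℝ] V := C - c0 • 1 with hN
  clear_value N
  -- N = A * D
  set D : V →ₗ[ℝ] V := ∑ i ∈ Finset.univ.erase (0 : Fin m), c i • A ^ ((i : ℕ) - 1) with hD
  clear_value D
  have hNAD : N = A * D := by
    rw [hN, hCP, hP, hD, Finset.mul_sum]
    rw [← Finset.add_sum_erase _ _ (Finset.mem_univ (0 : Fin m))]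
    have h0 : c 0 • A ^ ((0 : Fin m) : ℕ) = c0 • 1 := by
      rw [hc0]; norm_num
    rw [h0, add_sub_cancel_left]
    refine Finset.sum_congr rfl fun i hi => ?_
    have hi0 : i ≠ 0 := Finset.ne_of_mem_erase hi
    have hi1 : 1 ≤ (i : ℕ) := by
      by_contra h
      push_neg at h
      exact hi0 (Fin.ext (by simpa using Nat.lt_one_iff.mp h))
    rw [mul_smul_comm, ← pow_succ', show (i : ℕ) - 1 + 1 = (i : ℕ) by omega]
  have hAD : Commute A D := by
    rw [hD]
    exact Commute.sum_right _ _ _ fun i _ => (Commute.pow_right (Commute.refl A) _).smul_right _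
  -- N^m = 0
  have hNnil : N ^ m = 0 := by
    rw [hNAD, hAD.mul_pow, hnil, zero_mul]
  -- N kills A^(m-1) v
  have hNw0 : N ((A ^ (m - 1)) v) = 0 := by
    have hz : A ((A ^ (m - 1)) v) = 0 := by
      rw [← Module.End.mul_apply, ← pow_succ', show m - 1 + 1 = m by omega, hnil,
        LinearMap.zero_apply]
    rw [hNAD, hAD.eq, Module.End.mul_apply, hz, map_zero]
  -- expand C^2
  have hexp : (c0 ^ 2) • (1 : V →ₗ[ℝ] V) + (2 * c0) • N + N * N = 1 := by
    have hCN : C = c0 • 1 + N := by rw [hN]; abel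
    calc (c0 ^ 2) • (1 : V →ₗ[ℝ] V) + (2 * c0) • N + N * N
        = (c0 • 1 + N) * (c0 • 1 + N) := by
          simp only [mul_add, add_mul, smul_mul_assoc, mul_smul_comm, one_mul, mul_one,
            smul_smul, pow_two, two_mul, add_smul]
          rw [smul_add, smul_smul]
          abel
      _ = 1 := by rw [← hCN, hC2]
  -- c0^2 = 1
  have hc02 : c0 ^ 2 = 1 := by
    have happ := congrFun (congrArg DFunLike.coe hexp) ((A ^ (m - 1)) v)
    simp only [LinearMap.add_apply, LinearMap.smul_apply, Module.End.one_apply,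
      Module.End.mul_apply, hNw0, map_zero, smul_zero, add_zero] at happ
    have : (c0 ^ 2 - 1) • (A ^ (m - 1)) v = 0 := by
      rw [sub_smul, one_smul, happ, sub_self]
    rcases smul_eq_zero.mp this with h | h
    · linarith [sub_eq_zero.mp h]
    · exact absurd h hv
  have hc0ne : c0 ≠ 0 := by
    intro h; rw [h] at hc02; norm_num at hc02
  -- (2*c0) • N + N*N = 0
  have h1 : (2 * c0) • N + N * N = 0 := by
    have h2 := hexp
    rw [hc02, one_smul] at h2
    calc (2 * c0) • N + N * N
        = 1 + (2 * c0) • N + N * N - 1 := by abel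
      _ = 0 := by rw [h2, sub_self]
  set a : ℝ := -(1 / (2 * c0)) with ha
  clear_value a
  have hNeq : N = a • (N * N) := by
    have h3 : (2 * c0) • N = -(N * N) := eq_neg_of_add_eq_zero_left h1
    have h2c0 : (2 : ℝ) * c0 ≠ 0 := by
      simp [hc0ne]
    calc N = (1 / (2 * c0)) • ((2 * c0) • N) := by
          rw [smul_smul, one_div, inv_mul_cancel₀ h2c0, one_smul]
      _ = (1 / (2 * c0)) • (-(N * N)) := by rw [h3]
      _ = a • (N * N) := by rw [ha, smul_neg, neg_smul]
  -- iterate to get N = 0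
  have hiter : ∀ k : ℕ, N = (a ^ k) • N ^ (k + 1) := by
    intro k
    induction k with
    | zero => simp
    | succ n ihn =>
      have hstep : N ^ (n + 1) = a • N ^ (n + 2) := by
        calc N ^ (n + 1) = N ^ n * N := by rw [pow_succ]
          _ = N ^ n * (a • (N * N)) := by rw [← hNeq]
          _ = a • (N ^ n * (N * N)) := by rw [mul_smul_comm]
          _ = a • N ^ (n + 2) := by rw [show N ^ n * (N * N) = N ^ (n + 2) by
                rw [show n + 2 = n + 1 + 1 from rfl, pow_succ, pow_succ, mul_assoc]]
      calc N = a ^ n • N ^ (n + 1) := ihn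
        _ = a ^ n • (a • N ^ (n + 2)) := by rw [hstep]
        _ = a ^ (n + 1) • N ^ (n + 2) := by rw [smul_smul, mul_comm, ← pow_succ']
  have hN0 : N = 0 := by
    have := hiter m
    rw [pow_succ, hNnil, zero_mul, smul_zero] at this
    exact this
  -- conclude
  have hCfin : C = c0 • 1 := by
    have h5 := hN0
    rw [hN] at h5
    rw [← sub_eq_zero]
    exact h5
  have hcc : c0 = 1 ∨ c0 = -1 := by
    have h6 := hc02
    rw [pow_two] at h6
    exact mul_self_eq_one_iff.mp h6
  rcases hcc with h | h
  · left
    rw [hCfin, h, one_smul, Module.End.one_eq_id]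
  · right
    rw [hCfin, h, neg_smul, one_smul, Module.End.one_eq_id]
end

section
/- Let A be a self-adjoint nilpotent endomorphism of an m-dimensional pseudo-Euclidean space (V, ⟨·,·⟩) with A^{m-1} ≠ 0, and let q > 0. Then there exists exactly one pair {C, -C} of mutually opposite linear isometries of V satisfying C A C^{-1} = q² A, and C is diagonalized in a basis e_1, ..., e_m as in the normal form theorem, with eigenvalues ± q^{m+1-2j} for j = 1, ..., m (for a single fixed sign). -/
open Module

section AuxConjIso

variable {V : Type*} [AddCommGroup V] [Module ℝ V]
variable {m : ℕ} {B : V →ₗ[ℝ] V →ₗ[ℝ] ℝ} {A : V →ₗ[ℝ] V}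

lemma aux_sa_pow (hsa : ∀ v w, B (A v) w = B v (A w)) :
    ∀ (k : ℕ) (v w : V), B ((A ^ k) v) w = B v ((A ^ k) w) := by
  intro k
  induction k with
  | zero => intro v w; simp
  | succ n ih =>
    intro v w
    have h1 : (A ^ (n + 1)) v = A ((A ^ n) v) := by rw [pow_succ']; rfl
    have h2 : (A ^ (n + 1)) w = (A ^ n) (A w) := by rw [pow_succ]; rfl
    rw [h1, h2, hsa, ih]

lemma aux_pow_zero (hnil : A ^ m = 0) {k : ℕ} (hk : m ≤ k) : (A ^ k : V →ₗ[ℝ] V) = 0 := by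
  have : A ^ k = A ^ (k - m) * A ^ m := by rw [← pow_add]; congr 1; omega
  rw [this, hnil, mul_zero]

lemma aux_comp_pow (j k : ℕ) (x : V) : (A ^ j) ((A ^ k) x) = (A ^ (j + k)) x := by
  rw [pow_add]; rfl

lemma aux_good (hm : 2 ≤ m)
    (hsymm : ∀ v w, B v w = B w v)
    (hnd : ∀ v, (∀ w, B v w = 0) → v = 0)
    (hsa : ∀ v w, B (A v) w = B v (A w))
    (hnil : A ^ m = 0) (hne : A ^ (m - 1) ≠ 0) :
    ∃ (v : V) (c : ℝ), c ≠ 0 ∧ ∀ k : ℕ, B v ((A ^ k) v) = if k = m - 1 then c else 0 := by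
  obtain ⟨u, hu⟩ : ∃ u : V, (A ^ (m - 1)) u ≠ 0 := by
    by_contra h; push_neg at h
    exact hne (LinearMap.ext fun x => by simpa using h x)
  obtain ⟨w, hw⟩ : ∃ w, B ((A ^ (m - 1)) u) w ≠ 0 := by
    by_contra h; push_neg at h; exact hu (hnd _ h)
  have hw' : B u ((A ^ (m - 1)) w) ≠ 0 := by rwa [← aux_sa_pow hsa]
  have hsym2 : ∀ x y : V, B x ((A ^ (m - 1)) y) = B y ((A ^ (m - 1)) x) := fun x y => by
    rw [← aux_sa_pow hsa, hsymm]
  obtain ⟨z, hz⟩ : ∃ z, B z ((A ^ (m - 1)) z) ≠ 0 := by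
    by_cases h1 : B u ((A ^ (m - 1)) u) ≠ 0
    · exact ⟨u, h1⟩
    by_cases h2 : B w ((A ^ (m - 1)) w) ≠ 0
    · exact ⟨w, h2⟩
    push_neg at h1 h2
    refine ⟨u + w, ?_⟩
    have hexp : B (u + w) ((A ^ (m - 1)) (u + w)) = 2 * B u ((A ^ (m - 1)) w) := by
      have e1 : (A ^ (m - 1)) (u + w) = (A ^ (m - 1)) u + (A ^ (m - 1)) w := map_add _ _ _
      rw [e1, map_add, map_add, LinearMap.add_apply, LinearMap.add_apply, hsym2 w u, h1, h2]
      ring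
    rw [hexp]
    intro h0; apply hw'; linarith
  have Bk0 : ∀ (x : V) (k : ℕ), m ≤ k → B x ((A ^ k) x) = 0 := fun x k hk => by
    rw [aux_pow_zero hnil hk]; simp
  have key : ∀ r : ℕ, ∃ v : V, B v ((A ^ (m - 1)) v) ≠ 0 ∧
      ∀ k : ℕ, k < m - 1 → m - 1 - r ≤ k → B v ((A ^ k) v) = 0 := by
    intro r
    induction r with
    | zero => exact ⟨z, hz, fun k hk1 hk2 => absurd hk1 (by omega)⟩
    | succ r ih =>
      obtain ⟨v, hvc, hv0⟩ := ih
      by_cases hr : m - 1 ≤ r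
      · exact ⟨v, hvc, fun k hk1 hk2 => hv0 k hk1 (by omega)⟩
      push_neg at hr
      set c := B v ((A ^ (m - 1)) v) with hc
      set d := B v ((A ^ (m - 2 - r)) v) with hd
      set a := -d / (2 * c) with ha
      set v' := v + a • (A ^ (r + 1)) v with hv'
      have hcross : ∀ k : ℕ, B ((A ^ (r + 1)) v) ((A ^ k) v) = B v ((A ^ (k + (r + 1))) v) := by
        intro k
        have e : r + 1 + k = k + (r + 1) := by omega
        rw [aux_sa_pow hsa, aux_comp_pow, e]
      have hexp : ∀ k : ℕ, B v' ((A ^ k) v')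
          = B v ((A ^ k) v) + 2 * a * B v ((A ^ (k + (r + 1))) v)
            + a * a * B v ((A ^ (k + 2 * (r + 1))) v) := by
        intro k
        have e4 : B ((A ^ (r + 1)) v) ((A ^ (k + (r + 1))) v)
            = B v ((A ^ (k + 2 * (r + 1))) v) := by
          have e : r + 1 + (k + (r + 1)) = k + 2 * (r + 1) := by omega
          rw [aux_sa_pow hsa, aux_comp_pow, e]
        simp only [hv', map_add, map_smul, LinearMap.add_apply, LinearMap.smul_apply,
          smul_eq_mul, aux_comp_pow, hcross, e4]
        ring
      refine ⟨v', ?_, ?_⟩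
      · rw [hexp (m - 1), Bk0 v (m - 1 + (r + 1)) (by omega), Bk0 v (m - 1 + 2 * (r + 1)) (by omega)]
        simp only [mul_zero, add_zero]
        rw [← hc]
        exact hvc
      · intro k hk1 hk2
        by_cases hkd : k = m - 2 - r
        · rw [hexp k]
          have e2 : k + (r + 1) = m - 1 := by omega
          rw [e2, ← hc, Bk0 v (k + 2 * (r + 1)) (by omega)]
          rw [hkd, ← hd, ha]
          field_simp
          ring
        · rw [hexp k, hv0 k hk1 (by omega), Bk0 v (k + (r + 1)) (by omega),
            Bk0 v (k + 2 * (r + 1)) (by omega)]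
          ring
  obtain ⟨v, hvc, hv0⟩ := key m
  refine ⟨v, B v ((A ^ (m - 1)) v), hvc, fun k => ?_⟩
  by_cases hk : k = m - 1
  · rw [if_pos hk, hk]
  by_cases hk2 : k < m - 1
  · rw [if_neg hk]
    exact hv0 k hk2 (by omega)
  · rw [if_neg hk]
    exact Bk0 v k (by omega)

lemma aux_basis (hm : 2 ≤ m) (hdim : finrank ℝ V = m)
    (hsa : ∀ v w, B (A v) w = B v (A w))
    {v : V} {c : ℝ} (hc : c ≠ 0)
    (hBv : ∀ k : ℕ, B v ((A ^ k) v) = if k = m - 1 then c else 0) :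
    ∃ b : Basis (Fin m) ℝ V, ∀ k : Fin m, b k = (A ^ (k : ℕ)) v := by
  haveI : Nonempty (Fin m) := ⟨⟨0, by omega⟩⟩
  have hpair : ∀ s t : ℕ, B ((A ^ s) v) ((A ^ t) v) = if s + t = m - 1 then c else 0 := by
    intro s t
    rw [aux_sa_pow hsa, aux_comp_pow, hBv]
  have hli : LinearIndependent ℝ (fun k : Fin m => (A ^ (k : ℕ)) v) := by
    rw [Fintype.linearIndependent_iff]
    intro g hg i
    have h0 : B ((A ^ (m - 1 - (i : ℕ))) v) (∑ t : Fin m, g t • (A ^ (t : ℕ)) v) = 0 := by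
      rw [hg]; simp
    rw [map_sum] at h0
    have hterm : ∀ t : Fin m,
        B ((A ^ (m - 1 - (i : ℕ))) v) (g t • (A ^ (t : ℕ)) v)
          = if t = i then g t * c else 0 := by
      intro t
      rw [LinearMap.map_smul, smul_eq_mul, hpair]
      have hi := i.isLt
      have ht := t.isLt
      by_cases h : t = i
      · rw [if_pos h, if_pos (by subst h; omega)]
      · rw [if_neg h, if_neg (by intro hcon; apply h; exact Fin.ext (by omega)), mul_zero]
    rw [Finset.sum_congr rfl (fun t _ => hterm t)] at h0
    rw [Finset.sum_ite_eq' Finset.univ i (fun t => g t * c)] at h0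
    simp only [Finset.mem_univ, if_true] at h0
    exact (mul_eq_zero.mp h0).resolve_right hc
  refine ⟨basisOfLinearIndependentOfCardEqFinrank hli (by simp [hdim]), ?_⟩
  intro k
  rw [coe_basisOfLinearIndependentOfCardEqFinrank]

lemma aux_unique (hm : 2 ≤ m) (hdim : finrank ℝ V = m)
    (hsa : ∀ v w, B (A v) w = B v (A w)) (_hnil : A ^ m = 0)
    {v : V} {c : ℝ} (hc : c ≠ 0)
    (hBv : ∀ k : ℕ, B v ((A ^ k) v) = if k = m - 1 then c else 0)
    {q : ℝ} (hq : 0 < q) {C' : V →ₗ[ℝ] V}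
    (hiso : ∀ x y, B (C' x) (C' y) = B x y)
    (hint : C' ∘ₗ A = q ^ 2 • (A ∘ₗ C')) :
    ∃ s : ℝ, (s = 1 ∨ s = -1) ∧
      ∀ k : ℕ, k < m →
        C' ((A ^ k) v) = (s * q ^ (2 * (k : ℤ) + 1 - (m : ℤ))) • (A ^ k) v := by
  have hq0 : q ≠ 0 := ne_of_gt hq
  obtain ⟨b, hb⟩ := aux_basis hm hdim hsa hc hBv
  have hint1 : ∀ x, C' (A x) = q ^ 2 • A (C' x) := by
    intro x
    have := LinearMap.congr_fun hint x
    simpa using this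
  have hintk : ∀ (k : ℕ) (x : V), C' ((A ^ k) x) = q ^ (2 * k) • (A ^ k) (C' x) := by
    intro k
    induction k with
    | zero => intro x; simp
    | succ n ih =>
      intro x
      have h1 : (A ^ (n + 1)) x = (A ^ n) (A x) := by rw [pow_succ]; rfl
      have h2 : ∀ y : V, (A ^ n) (A y) = (A ^ (n + 1)) y := fun y => by rw [pow_succ]; rfl
      rw [h1, ih (A x), hint1 x, map_smul, smul_smul, h2]
      congr 1
      rw [← pow_add]
      ring
  set w := C' v with hw_def
  have i0lt : (0 : ℕ) < m := by omega
  set i0 : Fin m := ⟨0, i0lt⟩ with hi0_def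
  -- the quadratic relations
  have hrel : ∀ n : ℕ, n < m →
      q ^ (2 * n) * B w ((A ^ n) w) = if n = m - 1 then c else 0 := by
    intro n hn
    have h := hiso v ((A ^ n) v)
    rw [hintk n v, map_smul, smul_eq_mul, hBv] at h
    exact h
  have hBpair : ∀ (s t : Fin m) (n : ℕ),
      B (b s) ((A ^ n) (b t)) = if (s : ℕ) + (n + (t : ℕ)) = m - 1 then c else 0 := by
    intro s t n
    rw [hb, hb, aux_comp_pow, aux_sa_pow hsa, aux_comp_pow, hBv]
  have hexp : ∀ n : ℕ, B w ((A ^ n) w) = ∑ s : Fin m, ∑ t : Fin m,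
      b.repr w s * (b.repr w t * (if (s : ℕ) + (n + (t : ℕ)) = m - 1 then c else 0)) := by
    intro n
    conv_lhs => rw [← b.sum_repr w]
    simp only [map_sum, map_smul, LinearMap.sum_apply, LinearMap.smul_apply, smul_eq_mul,
      Finset.mul_sum, hBpair]
    rw [Finset.sum_comm]
    exact Finset.sum_congr rfl fun s _ => Finset.sum_congr rfl fun t _ => by ring
  have hsum_pair : ∀ (i j : Fin m) (X : ℝ),
      (∑ s : Fin m, ∑ t : Fin m, if s = i ∧ t = j then X else 0) = X := by
    intro i j X
    simp [ite_and, Finset.sum_ite_eq']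
  -- the (m-1)-relation
  have hE1 : B w ((A ^ (m - 1)) w) = b.repr w i0 * (b.repr w i0 * c) := by
    rw [hexp (m - 1)]
    have hpt : ∀ s t : Fin m,
        b.repr w s * (b.repr w t * (if (s : ℕ) + (m - 1 + (t : ℕ)) = m - 1 then c else 0))
          = if s = i0 ∧ t = i0 then b.repr w i0 * (b.repr w i0 * c) else 0 := by
      intro s t
      by_cases h : (s : ℕ) + (m - 1 + (t : ℕ)) = m - 1
      · have hs : s = i0 := Fin.ext (show (s : ℕ) = 0 by omega)
        have ht : t = i0 := Fin.ext (show (t : ℕ) = 0 by omega)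
        rw [if_pos h, if_pos ⟨hs, ht⟩, hs, ht]
      · rw [if_neg h, if_neg, mul_zero, mul_zero]
        rintro ⟨hs, ht⟩
        apply h
        rw [hs, ht]
        show (0 : ℕ) + (m - 1 + (0 : ℕ)) = m - 1
        omega
    rw [Finset.sum_congr rfl fun s _ => Finset.sum_congr rfl fun t _ => hpt s t,
      hsum_pair]
  have ha0 : q ^ (2 * (m - 1)) * (b.repr w i0 * (b.repr w i0 * c)) = c := by
    have := hrel (m - 1) (by omega)
    rw [hE1] at this
    rwa [if_pos rfl] at this
  have ha0ne : b.repr w i0 ≠ 0 := by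
    intro h0
    rw [h0] at ha0
    simp at ha0
    exact hc ha0.symm
  -- vanishing of the higher coefficients
  have hzero : ∀ k : ℕ, (hk : k < m) → 1 ≤ k → b.repr w ⟨k, hk⟩ = 0 := by
    intro k
    induction k using Nat.strong_induction_on with
    | _ k IH =>
      intro hk hk1
      set ik : Fin m := ⟨k, hk⟩ with hik_def
      set n : ℕ := m - 1 - k with hn_def
      have hn : n < m := by omega
      have hEk : B w ((A ^ n) w)
          = b.repr w i0 * (b.repr w ik * c) + b.repr w ik * (b.repr w i0 * c) := by
        rw [hexp n]
        have hpt : ∀ s t : Fin m,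
            b.repr w s * (b.repr w t * (if (s : ℕ) + (n + (t : ℕ)) = m - 1 then c else 0))
              = (if s = i0 ∧ t = ik then b.repr w i0 * (b.repr w ik * c) else 0)
                + (if s = ik ∧ t = i0 then b.repr w ik * (b.repr w i0 * c) else 0) := by
          intro s t
          by_cases h : (s : ℕ) + (n + (t : ℕ)) = m - 1
          · have hst : (s : ℕ) + (t : ℕ) = k := by omega
            by_cases hs0 : (s : ℕ) = 0
            · have hs : s = i0 := Fin.ext hs0
              have ht : t = ik := Fin.ext (show (t : ℕ) = k by omega)
              rw [if_pos h, if_pos ⟨hs, ht⟩, if_neg, hs, ht, add_zero]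
              rintro ⟨hs', ht'⟩
              rw [hs] at hs'
              have : (0 : ℕ) = k := congrArg Fin.val hs'
              omega
            · by_cases hsk : (s : ℕ) = k
              · have hs : s = ik := Fin.ext hsk
                have ht : t = i0 := Fin.ext (show (t : ℕ) = 0 by omega)
                rw [if_pos h, if_neg, if_pos ⟨hs, ht⟩, hs, ht, zero_add]
                rintro ⟨hs', ht'⟩
                rw [hs] at hs'
                have : k = (0 : ℕ) := congrArg Fin.val hs'
                omega
              · have hslt : (s : ℕ) < k := by omega
                have hz : b.repr w s = 0 := by
                  have := IH (s : ℕ) hslt s.isLt (by omega)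
                  rwa [Fin.eta] at this
                rw [if_pos h, hz, zero_mul, if_neg, if_neg, add_zero]
                · rintro ⟨hs', ht'⟩
                  exact hsk (congrArg Fin.val hs')
                · rintro ⟨hs', ht'⟩
                  exact hs0 (congrArg Fin.val hs')
          · rw [if_neg h, mul_zero, mul_zero, if_neg, if_neg, add_zero]
            · rintro ⟨hs', ht'⟩
              apply h
              rw [hs', ht']
              show (k : ℕ) + (n + (0 : ℕ)) = m - 1
              omega
            · rintro ⟨hs', ht'⟩
              apply h
              rw [hs', ht']
              show (0 : ℕ) + (n + (k : ℕ)) = m - 1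
              omega
        rw [Finset.sum_congr rfl fun s _ => Finset.sum_congr rfl fun t _ => hpt s t]
        simp only [Finset.sum_add_distrib]
        rw [hsum_pair, hsum_pair]
      have h0 : q ^ (2 * n) * B w ((A ^ n) w) = 0 := by
        have := hrel n hn
        rwa [if_neg (by omega)] at this
      rw [hEk] at h0
      have h1 : b.repr w i0 * (b.repr w ik * c) + b.repr w ik * (b.repr w i0 * c) = 0 := by
        have hqn : q ^ (2 * n) ≠ 0 := pow_ne_zero _ hq0
        exact (mul_eq_zero.mp h0).resolve_left hqn
      have h2 : b.repr w ik * (b.repr w i0 * c * 2) = 0 := by linear_combination h1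
      have h3 : b.repr w i0 * c * 2 ≠ 0 :=
        mul_ne_zero (mul_ne_zero ha0ne hc) two_ne_zero
      exact (mul_eq_zero.mp h2).resolve_right h3
  -- hence w is a multiple of v
  have hwv : w = b.repr w i0 • v := by
    have h1 : ∑ j : Fin m, b.repr w j • b j = b.repr w i0 • b i0 := by
      apply Finset.sum_eq_single i0
      · intro j _ hj
        have hjv : (1 : ℕ) ≤ (j : ℕ) := by
          rcases Nat.eq_zero_or_pos (j : ℕ) with h | h
          · exact absurd (Fin.ext h) hj
          · omega
        have := hzero (j : ℕ) j.isLt hjv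
        rw [Fin.eta] at this
        rw [this, zero_smul]
      · intro h
        exact absurd (Finset.mem_univ _) h
    have h2 : b i0 = v := by
      rw [hb]
      show (A ^ (0 : ℕ)) v = v
      simp
    conv_lhs => rw [← b.sum_repr w]
    rw [h1, h2]
  -- normalize the eigenvalue
  have h4 : q ^ (2 * (m - 1)) * (b.repr w i0 * b.repr w i0) = 1 := by
    have h3 : (q ^ (2 * (m - 1)) * (b.repr w i0 * b.repr w i0) - 1) * c = 0 := by
      linear_combination ha0
    rcases mul_eq_zero.mp h3 with h | h
    · linarith [sub_eq_zero.mp h]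
    · exact absurd h hc
  obtain ⟨a0, ha0ne', hwv', h4'⟩ :
      ∃ a0 : ℝ, a0 ≠ 0 ∧ w = a0 • v ∧ q ^ (2 * (m - 1)) * (a0 * a0) = 1 :=
    ⟨b.repr w i0, ha0ne, hwv, h4⟩
  refine ⟨q ^ ((m : ℤ) - 1) * a0, ?_, ?_⟩
  · apply mul_self_eq_one_iff.mp
    have hz1 : q ^ ((m : ℤ) - 1) * q ^ ((m : ℤ) - 1) = q ^ ((2 * (m - 1) : ℕ) : ℤ) := by
      rw [← zpow_add₀ hq0]
      congr 1
      push_cast [Nat.cast_sub (by omega : 1 ≤ m)]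
      ring
    calc q ^ ((m : ℤ) - 1) * a0 * (q ^ ((m : ℤ) - 1) * a0)
        = (q ^ ((m : ℤ) - 1) * q ^ ((m : ℤ) - 1)) * (a0 * a0) := by ring
      _ = q ^ ((2 * (m - 1) : ℕ) : ℤ) * (a0 * a0) := by rw [hz1]
      _ = q ^ (2 * (m - 1)) * (a0 * a0) := by rw [zpow_natCast]
      _ = 1 := h4'
  · intro k hk
    have hsc : q ^ ((m : ℤ) - 1) * a0 * q ^ (2 * (k : ℤ) + 1 - (m : ℤ))
        = q ^ (2 * k) * a0 := by
      have h5 : q ^ ((m : ℤ) - 1) * q ^ (2 * (k : ℤ) + 1 - (m : ℤ)) = q ^ ((2 * k : ℕ) : ℤ) := by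
        rw [← zpow_add₀ hq0]
        congr 1
        push_cast
        ring
      calc q ^ ((m : ℤ) - 1) * a0 * q ^ (2 * (k : ℤ) + 1 - (m : ℤ))
          = (q ^ ((m : ℤ) - 1) * q ^ (2 * (k : ℤ) + 1 - (m : ℤ))) * a0 := by ring
        _ = q ^ ((2 * k : ℕ) : ℤ) * a0 := by rw [h5]
        _ = q ^ (2 * k) * a0 := by rw [zpow_natCast]
    rw [hintk k v, ← hw_def, hwv', map_smul, smul_smul, hsc]

end AuxConjIso

/-- For a self-adjoint nilpotent endomorphism `A` with `A^(m-1) ≠ 0` of an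
`m`-dimensional pseudo-Euclidean space `(V, B)` and any `q > 0`, there is exactly one
pair `{C, -C}` of mutually opposite linear isometries with `C A C⁻¹ = q² A`
(equivalently `C ∘ A = q² (A ∘ C)`), and `C` is diagonalized by any normal-form basis
`e 1, ..., e m` with eigenvalues `± q^(m+1-2j)` (for a single fixed sign). -/
theorem conjugating_isometry_exists_unique
    (V : Type*) [AddCommGroup V] [Module ℝ V]
    (m : ℕ) (hm : 2 ≤ m) (hdim : finrank ℝ V = m)
    (B : V →ₗ[ℝ] V →ₗ[ℝ] ℝ)
    (hsymm : ∀ v w, B v w = B w v)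
    (hnd : ∀ v, (∀ w, B v w = 0) → v = 0)
    (A : V →ₗ[ℝ] V)
    (hsa : ∀ v w, B (A v) w = B v (A w))
    (hnil : A ^ m = 0) (hne : A ^ (m - 1) ≠ 0)
    (q : ℝ) (hq : 0 < q) :
    ∃ C : V →ₗ[ℝ] V,
      Function.Bijective C ∧ (∀ v w, B (C v) (C w) = B v w) ∧
      C ∘ₗ A = q ^ 2 • (A ∘ₗ C) ∧
      (∀ C' : V →ₗ[ℝ] V, Function.Bijective C' → (∀ v w, B (C' v) (C' w) = B v w) →
        C' ∘ₗ A = q ^ 2 • (A ∘ₗ C') → C' = C ∨ C' = -C) ∧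
      (∀ (e : ℕ → V) (ε : ℝ), (ε = 1 ∨ ε = -1) → e 0 = 0 →
        (∀ j, 1 ≤ j → j ≤ m → A (e j) = e (j - 1)) →
        (∀ i j, 1 ≤ i → i ≤ m → 1 ≤ j → j ≤ m →
          B (e i) (e (m + 1 - j)) = if i = j then ε else 0) →
        LinearIndependent ℝ (fun i : Fin m => e (i.1 + 1)) →
        Submodule.span ℝ (Set.range fun i : Fin m => e (i.1 + 1)) = ⊤ →
        ((∀ j : ℕ, 1 ≤ j → j ≤ m →
            C (e j) = (q ^ ((m : ℤ) + 1 - 2 * (j : ℤ))) • e j) ∨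
         (∀ j : ℕ, 1 ≤ j → j ≤ m →
            C (e j) = -((q ^ ((m : ℤ) + 1 - 2 * (j : ℤ))) • e j)))) := by
  have hq0 : q ≠ 0 := ne_of_gt hq
  obtain ⟨v, c, hc, hBv⟩ := aux_good hm hsymm hnd hsa hnil hne
  obtain ⟨b, hb⟩ := aux_basis hm hdim hsa hc hBv
  set lam : Fin m → ℝ := fun k => q ^ (2 * (((k : ℕ) : ℤ)) + 1 - (m : ℤ)) with hlam
  set C : V →ₗ[ℝ] V := b.constr ℝ (fun k => lam k • b k) with hC_def
  have hCb : ∀ k : Fin m, C (b k) = lam k • b k := fun k => b.constr_basis ℝ _ k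
  set Ci : V →ₗ[ℝ] V := b.constr ℝ (fun k => (lam k)⁻¹ • b k) with hCi_def
  have hCib : ∀ k : Fin m, Ci (b k) = (lam k)⁻¹ • b k := fun k => b.constr_basis ℝ _ k
  have hlam0 : ∀ k, lam k ≠ 0 := fun k => zpow_ne_zero _ hq0
  have hCCi : C ∘ₗ Ci = LinearMap.id := by
    apply b.ext
    intro k
    rw [LinearMap.comp_apply, hCib, map_smul, hCb, smul_smul,
      inv_mul_cancel₀ (hlam0 k), one_smul, LinearMap.id_apply]
  have hCiC : Ci ∘ₗ C = LinearMap.id := by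
    apply b.ext
    intro k
    rw [LinearMap.comp_apply, hCb, map_smul, hCib, smul_smul,
      mul_inv_cancel₀ (hlam0 k), one_smul, LinearMap.id_apply]
  have hCbij : Function.Bijective C := by
    constructor
    · intro x y hxy
      have hx := LinearMap.congr_fun hCiC x
      have hy := LinearMap.congr_fun hCiC y
      rw [LinearMap.comp_apply, LinearMap.id_apply] at hx hy
      rw [← hx, ← hy, hxy]
    · intro y
      refine ⟨Ci y, ?_⟩
      have := LinearMap.congr_fun hCCi y
      rwa [LinearMap.comp_apply, LinearMap.id_apply] at this
  have hbb : ∀ i j : Fin m, B (b i) (b j) = if (i : ℕ) + (j : ℕ) = m - 1 then c else 0 := by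
    intro i j
    rw [hb, hb, aux_sa_pow hsa, aux_comp_pow, hBv]
  have hCiso : ∀ x y, B (C x) (C y) = B x y := by
    have hBB : B.compl₁₂ C C = B := by
      apply LinearMap.ext_basis b b
      intro i j
      rw [LinearMap.compl₁₂_apply, hCb, hCb]
      simp only [map_smul, LinearMap.smul_apply, smul_eq_mul]
      rw [hbb]
      by_cases h : (i : ℕ) + (j : ℕ) = m - 1
      · rw [if_pos h]
        have h1 : lam i * lam j = 1 := by
          simp only [hlam]
          rw [← zpow_add₀ hq0,
            show 2 * (((i : ℕ) : ℤ)) + 1 - (m : ℤ) + (2 * (((j : ℕ) : ℤ)) + 1 - (m : ℤ)) = 0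
              from by omega, zpow_zero]
        calc lam j * (lam i * c) = (lam i * lam j) * c := by ring
          _ = c := by rw [h1, one_mul]
      · rw [if_neg h, mul_zero, mul_zero]
    intro x y
    have h := LinearMap.congr_fun (LinearMap.congr_fun hBB x) y
    rwa [LinearMap.compl₁₂_apply] at h
  have hAb : ∀ k : Fin m, A (b k) = (A ^ ((k : ℕ) + 1)) v := by
    intro k
    have h := aux_comp_pow (A := A) 1 (k : ℕ) v
    rw [pow_one] at h
    rw [hb, h, add_comm 1 (k : ℕ)]
  have hCint : C ∘ₗ A = q ^ 2 • (A ∘ₗ C) := by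
    apply b.ext
    intro k
    rw [LinearMap.comp_apply, LinearMap.smul_apply, LinearMap.comp_apply, hAb k, hCb,
      map_smul, hAb k]
    by_cases hk : (k : ℕ) + 1 < m
    · have hbk1 : (A ^ ((k : ℕ) + 1)) v = b ⟨(k : ℕ) + 1, hk⟩ := (hb ⟨(k : ℕ) + 1, hk⟩).symm
      rw [hbk1, hCb, smul_smul]
      congr 1
      simp only [hlam]
      rw [← zpow_natCast q 2, ← zpow_add₀ hq0]
      congr 1
      push_cast
      ring
    · have hm1 : (k : ℕ) + 1 = m := by have := k.isLt; omega
      have hz : (A ^ ((k : ℕ) + 1)) v = 0 := by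
        rw [hm1, hnil]
        simp
      rw [hz, map_zero, smul_zero, smul_zero]
  refine ⟨C, hCbij, hCiso, hCint, ?_, ?_⟩
  · intro C' _ hC'iso hC'int
    obtain ⟨s, hs, hCk⟩ := aux_unique hm hdim hsa hnil hc hBv hq hC'iso hC'int
    have hCk' : ∀ k : Fin m, C' (b k) = s • C (b k) := by
      intro k
      have hR : C ((A ^ (k : ℕ)) v) = lam k • ((A ^ (k : ℕ)) v) := by
        rw [← hb, hCb, hb]
      rw [hb, hCk (k : ℕ) k.isLt, hR, smul_smul]
    rcases hs with hs | hs
    · left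
      apply b.ext
      intro k
      rw [hCk' k, hs, one_smul]
    · right
      apply b.ext
      intro k
      rw [hCk' k, hs, LinearMap.neg_apply, neg_one_smul]
  · intro e ε hε he0 hA_e hBe hli hspan
    have hε0 : ε ≠ 0 := by rcases hε with h | h <;> rw [h] <;> norm_num
    have hEk : ∀ k : ℕ, k < m → (A ^ k) (e m) = e (m - k) := by
      intro k
      induction k with
      | zero => intro _; simp
      | succ n ih =>
        intro hn
        have h1 : (A ^ (n + 1)) (e m) = A ((A ^ n) (e m)) := by rw [pow_succ']; rfl
        rw [h1, ih (by omega), hA_e (m - n) (by omega) (by omega)]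
        congr 1
    have hBe' : ∀ k : ℕ, B (e m) ((A ^ k) (e m)) = if k = m - 1 then ε else 0 := by
      intro k
      by_cases hk : k < m
      · rw [hEk k hk]
        by_cases hk1 : k = m - 1
        · rw [if_pos hk1, hk1]
          have h := hBe m m (by omega) le_rfl (by omega) le_rfl
          rw [if_pos rfl] at h
          have he : m - (m - 1) = m + 1 - m := by omega
          rw [he]
          exact h
        · rw [if_neg hk1]
          have h := hBe m (k + 1) (by omega) le_rfl (by omega) (by omega)
          rw [if_neg (by omega)] at h
          have he : m - k = m + 1 - (k + 1) := by omega
          rw [he]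
          exact h
      · rw [aux_pow_zero hnil (by omega), if_neg (by omega)]
        simp
    obtain ⟨s, hs, hCk⟩ := aux_unique hm hdim hsa hnil hε0 hBe' hq hCiso hCint
    have hkey : ∀ j : ℕ, 1 ≤ j → j ≤ m →
        C (e j) = (s * q ^ ((m : ℤ) + 1 - 2 * (j : ℤ))) • e j := by
      intro j hj1 hjm
      have hk := hCk (m - j) (by omega)
      rw [hEk (m - j) (by omega)] at hk
      have hmj : m - (m - j) = j := by omega
      rw [hmj] at hk
      have hexp : 2 * (((m - j : ℕ) : ℤ)) + 1 - (m : ℤ) = (m : ℤ) + 1 - 2 * (j : ℤ) := by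
        omega
      rw [hexp] at hk
      exact hk
    rcases hs with hs | hs
    · left
      intro j hj1 hjm
      rw [hkey j hj1 hjm, hs, one_mul]
    · right
      intro j hj1 hjm
      rw [hkey j hj1 hjm, hs, neg_one_mul, neg_smul]
end

section
/- For a nilpotent self-adjoint endomorphism A of an m-dimensional pseudo-Euclidean space V, the following are equivalent: (i) A^{m-1} ≠ 0; (ii) rank A = m - 1; (iii) ±Id are the only linear isometries of V commuting with A; (iv) A commutes with only finitely many linear isometries of V; (v) 0 is the only skew-adjoint endomorphism of V commuting with A. -/
/-!
If `A ^ (m - 1) ≠ 0`, a vector `v` with `A ^ (m - 1) v ≠ 0` is cyclic for `A`, so every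
endomorphism commuting with `A` is a polynomial in `A`, hence self-adjoint and of the form
`c + (nilpotent)`. A self-adjoint isometry is an involution, and an involution `c + N` with `N`
nilpotent is `±1`.

Conversely, a nonzero skew-adjoint `S` commuting with `A` produces the infinitely many commuting
isometries `(t - S) (t + S)⁻¹` (Cayley transforms, for `-t` outside the spectrum of `S`). Such an
`S` exists as soon as `dim ker A ≥ 2`: for independent `a, b ∈ ker A` take
`S x = B(a, x) b - B(b, x) a`, which kills `range A ⊆ (ker A)^⊥`. Finally `rank A = m - 1` means
`dim ker A = 1`, and `dim ker Aᵏ ≤ k · dim ker A` then forces `A ^ (m - 1) ≠ 0`.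
-/

open Module Polynomial

section Nilpotent

open LinearMap Submodule

variable {K V V₂ V₃ : Type*} [Field K] [AddCommGroup V] [Module K V]
  [AddCommGroup V₂] [Module K V₂] [AddCommGroup V₃] [Module K V₃]

theorem LinearMap.finrank_ker_comp_le [FiniteDimensional K V] [FiniteDimensional K V₂]
    (f : V₂ →ₗ[K] V₃) (g : V →ₗ[K] V₂) :
    finrank K (ker (f ∘ₗ g)) ≤ finrank K (ker f) + finrank K (ker g) := by
  set h := g.domRestrict (ker (f ∘ₗ g))
  have hrange : finrank K (range h) ≤ finrank K (ker f) :=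
    Submodule.finrank_mono (by rintro _ ⟨x, rfl⟩; exact x.2)
  have hker : finrank K (ker h) ≤ finrank K (ker g) :=
    finrank_le_finrank_of_injective (f := ((ker (f ∘ₗ g)).subtype ∘ₗ (ker h).subtype).codRestrict
      (ker g) fun x => x.2) <|
      (injective_codRestrict_iff _).2 <| (injective_subtype _).comp (injective_subtype _)
  have := h.finrank_range_add_finrank_ker
  omega

theorem Module.End.finrank_ker_pow_le [FiniteDimensional K V] (A : Module.End K V) (k : ℕ) :
    finrank K (ker (A ^ k)) ≤ k * finrank K (ker A) := by
  induction k with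
  | zero => simp [Module.End.one_eq_id]
  | succ k ih =>
    have := finrank_ker_comp_le (A ^ k) A
    rw [pow_succ, Module.End.mul_eq_comp]
    linarith

theorem Module.End.finrank_ker_pos_of_isNilpotent [FiniteDimensional K V] [Nontrivial V]
    {A : Module.End K V} (hA : IsNilpotent A) : 0 < finrank K (ker A) :=
  Submodule.one_le_finrank_iff.2 fun h => ((isUnit_iff_ker_eq_bot A).2 h).not_isNilpotent hA

theorem Module.End.linearIndependent_pow_apply (A : Module.End K V) :
    ∀ (n : ℕ) (v : V), (A ^ n) v ≠ 0 → (A ^ (n + 1)) v = 0 →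
      LinearIndependent K (fun i : Fin (n + 1) => (A ^ (i : ℕ)) v)
  | 0, v, hv, _ => LinearIndependent.of_subsingleton (ι := Fin 1) 0 (by simpa using hv)
  | n + 1, v, hv, hv' => by
    have htail := A.linearIndependent_pow_apply n (A v)
      (by rwa [← Module.End.mul_apply, ← pow_succ]) (by rwa [← Module.End.mul_apply, ← pow_succ])
    have hcons : (fun i : Fin (n + 2) => (A ^ (i : ℕ)) v) =
        Fin.cons v fun i : Fin (n + 1) => (A ^ (i : ℕ)) (A v) := by
      funext i
      refine Fin.cases ?_ (fun i => ?_) i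
      · simp
      · simp [pow_succ, Module.End.mul_apply]
    rw [hcons, linearIndependent_finCons]
    refine ⟨htail, fun hmem => hv ?_⟩
    have hspan : span K (Set.range fun i : Fin (n + 1) => (A ^ (i : ℕ)) (A v)) ≤
        ker (A ^ (n + 1)) := by
      refine span_le.2 ?_
      rintro _ ⟨i, rfl⟩
      rw [SetLike.mem_coe, mem_ker, ← Module.End.mul_apply, ← pow_mul_comm, Module.End.mul_apply,
        ← Module.End.mul_apply (A ^ (n + 1)), ← pow_succ, hv', map_zero]
    exact hspan hmem

theorem Module.End.span_range_pow_apply_eq_top [FiniteDimensional K V] {A : Module.End K V}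
    {n : ℕ} (hdim : finrank K V = n + 1) (hA : A ^ (n + 1) = 0) {v : V} (hv : (A ^ n) v ≠ 0) :
    span K (Set.range fun i : ℕ => (A ^ i) v) = ⊤ :=
  eq_top_iff.2 <|
    ((A.linearIndependent_pow_apply n v hv (by simp [hA])).span_eq_top_of_card_eq_finrank'
      (by simp [hdim])).ge.trans
    (span_mono (Set.range_comp_subset_range Fin.val fun i => (A ^ i) v))

end Nilpotent

open Submodule in
theorem Module.End.exists_eq_aeval_of_commute {R M : Type*} [CommRing R] [AddCommGroup M]
    [Module R M] {A C : Module.End R M} {v : M}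
    (hv : span R (Set.range fun i : ℕ => (A ^ i) v) = ⊤) (hC : Commute C A) :
    ∃ p : R[X], C = aeval A p := by
  have hle : span R (Set.range fun i : ℕ => (A ^ i) v) ≤
      LinearMap.range (LinearMap.applyₗ v ∘ₗ (aeval A).toLinearMap) :=
    span_le.2 <| by rintro _ ⟨i, rfl⟩; exact ⟨X ^ i, by simp⟩
  obtain ⟨p, hp⟩ := hle (hv ▸ mem_top : C v ∈ _)
  -- `C` and `aeval A p` both commute with `A` and agree at `v`, hence at every `A ^ i v`.
  refine ⟨p, LinearMap.ext_on_range hv fun i => ?_⟩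
  have hpA : Commute (aeval A p) (A ^ i) := by simpa using (Commute.all p (X ^ i)).map (aeval A)
  simp only [LinearMap.comp_apply, AlgHom.toLinearMap_apply, LinearMap.applyₗ_apply_apply] at hp
  rw [← Module.End.mul_apply, (hC.pow_right i).eq, Module.End.mul_apply, ← hp,
    ← Module.End.mul_apply, ← hpA.eq, Module.End.mul_apply]

section SelfAdjoint

variable {R M : Type*} [CommRing R] [AddCommGroup M] [Module R M] {B : LinearMap.BilinForm R M}

theorem LinearMap.IsSelfAdjoint.pow {A : Module.End R M} (hA : B.IsSelfAdjoint A) (n : ℕ) :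
    B.IsSelfAdjoint ⇑(A ^ n) := by
  induction n with
  | zero => exact LinearMap.isAdjointPair_one
  | succ n ih => simpa only [LinearMap.IsSelfAdjoint, ← pow_succ, ← pow_succ'] using ih.mul hA

theorem LinearMap.IsSelfAdjoint.aeval {A : Module.End R M} (hA : B.IsSelfAdjoint A) (p : R[X]) :
    B.IsSelfAdjoint ⇑(aeval A p) := by
  induction p using Polynomial.induction_on' with
  | add p q hp hq => intro x y; simp only [map_add, LinearMap.add_apply, hp x y, hq x y]
  | monomial n a =>
    intro x y
    simp only [aeval_monomial, ← Algebra.smul_def, LinearMap.smul_apply, map_smul, hA.pow n x y]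

theorem LinearMap.IsSelfAdjoint.mul_self_eq_one_of_isOrthogonal (hB : B.SeparatingLeft)
    {C : Module.End R M} (hC : B.IsSelfAdjoint C) (hCo : B.IsOrthogonal C) : C * C = 1 :=
  LinearMap.ext fun x => sub_eq_zero.1 <| hB _ fun y => by
    rw [map_sub, LinearMap.sub_apply, Module.End.mul_apply, hC, hCo, Module.End.one_apply, sub_self]

end SelfAdjoint

section Algebra

variable {K R : Type*} [Field K] [Ring R] [Algebra K R]

theorem isNilpotent_aeval_sub_algebraMap_coeff_zero {a : R} (ha : IsNilpotent a) (p : K[X]) :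
    IsNilpotent (aeval a p - algebraMap K R (p.coeff 0)) := by
  obtain ⟨q, hq⟩ := X_dvd_sub_C (p := p)
  have hcomm : Commute a (aeval a q) := by simpa using (Commute.all X q).map (aeval a)
  rw [show aeval a p - algebraMap K R (p.coeff 0) = a * aeval a q by
    simpa using congrArg (aeval a) hq]
  exact hcomm.isNilpotent_mul_right ha

theorem isUnit_sub_algebraMap_of_isNilpotent_sub {x : R} {c d : K}
    (hx : IsNilpotent (x - algebraMap K R c)) (hcd : c ≠ d) : IsUnit (x - algebraMap K R d) := by
  have hunit : IsUnit (algebraMap K R (c - d)) := (isUnit_iff_ne_zero.2 (sub_ne_zero.2 hcd)).map _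
  simpa [map_sub] using hx.isUnit_add_left_of_commute hunit (Algebra.commutes _ _).symm

theorem eq_one_or_eq_neg_one_of_mul_self_eq_one [NeZero (2 : K)] {x : R} {c : K}
    (hx : x * x = 1) (hc : IsNilpotent (x - algebraMap K R c)) : x = 1 ∨ x = -1 := by
  rcases eq_or_ne c 1 with rfl | h1
  · have hu := isUnit_sub_algebraMap_of_isNilpotent_sub hc (d := -1) fun h =>
      two_ne_zero (α := K) (by linear_combination h)
    rw [map_neg, map_one, sub_neg_eq_add] at hu
    left
    rw [← sub_eq_zero, ← hu.mul_right_eq_zero]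
    simp [add_mul, mul_sub, hx, add_comm]
  · have hu := isUnit_sub_algebraMap_of_isNilpotent_sub hc h1
    rw [map_one] at hu
    right
    rw [← add_neg_eq_zero, neg_neg, ← hu.mul_right_eq_zero]
    simp [sub_mul, mul_add, hx]

end Algebra

theorem eq_one_or_eq_neg_one_of_isOrthogonal_of_commute {K V : Type*} [Field K] [NeZero (2 : K)]
    [AddCommGroup V] [Module K V] {B : LinearMap.BilinForm K V} (hB : B.SeparatingLeft)
    {A : Module.End K V} (hA : B.IsSelfAdjoint A) (hAn : IsNilpotent A) {v : V}
    (hv : Submodule.span K (Set.range fun i : ℕ => (A ^ i) v) = ⊤) {C : Module.End K V}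
    (hC : B.IsOrthogonal C) (hCA : Commute C A) : C = 1 ∨ C = -1 := by
  obtain ⟨p, rfl⟩ := Module.End.exists_eq_aeval_of_commute hv hCA
  exact eq_one_or_eq_neg_one_of_mul_self_eq_one
    ((hA.aeval p).mul_self_eq_one_of_isOrthogonal hB hC)
    (isNilpotent_aeval_sub_algebraMap_coeff_zero hAn p)

section Cayley

variable {K R : Type*} [Field K] [Ring R] [Algebra K R]

/-- `(t - S) (t + S)⁻¹`; since `Ring.inverse` is `0` at non-units, this is only meaningful when
`t + S` is invertible. -/
noncomputable def cayley (S : R) (t : K) : R :=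
  (algebraMap K R t - S) * Ring.inverse (algebraMap K R t + S)

theorem cayley_mul {S : R} {t : K} (h : IsUnit (algebraMap K R t + S)) :
    cayley S t * (algebraMap K R t + S) = algebraMap K R t - S := by
  rw [cayley, mul_assoc, Ring.inverse_mul_cancel _ h, mul_one]

theorem Commute.cayley_left {S A : R} (h : Commute S A) (t : K) : Commute (cayley S t) A := by
  have hadd : Commute (algebraMap K R t + S) A := (Algebra.commute_algebraMap_left t A).add_left h
  refine ((Algebra.commute_algebraMap_left t A).sub_left h).mul_left ?_
  by_cases hu : IsUnit (algebraMap K R t + S)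
  · obtain ⟨u, hu⟩ := hu
    rw [← hu, Ring.inverse_unit]
    exact Commute.units_inv_left (hu ▸ hadd)
  · rw [Ring.inverse_non_unit _ hu]
    exact Commute.zero_left A

theorem cayley_injOn [NeZero (2 : K)] {S : R} (hS : S ≠ 0) :
    Set.InjOn (cayley S) {t | IsUnit (algebraMap K R t + S)} := by
  intro t ht s hs hts
  by_contra hne
  have h₁ := cayley_mul ht
  have h₂ := cayley_mul hs
  rw [← hts] at h₂
  -- Subtracting `h₂` from `h₁` gives `cayley S t * (t - s) = t - s`.
  have hC : cayley S t = 1 := by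
    have h := congrArg₂ (· - ·) h₁ h₂
    simp only [← mul_sub, add_sub_add_right_eq_sub, sub_sub_sub_cancel_right, ← map_sub] at h
    exact ((isUnit_iff_ne_zero.2 (sub_ne_zero.2 hne)).map (algebraMap K R)).mul_right_cancel
      (by rwa [one_mul])
  rw [hC, one_mul, sub_eq_add_neg, add_right_inj, eq_neg_iff_add_eq_zero, ← two_smul K] at h₁
  exact hS ((smul_eq_zero_iff_right two_ne_zero).1 h₁)

end Cayley

section BilinForm

variable {K V : Type*} [Field K] [AddCommGroup V] [Module K V] {B : LinearMap.BilinForm K V}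

theorem isOrthogonal_cayley {S : Module.End K V} (hS : B.IsSkewAdjoint S) {t : K}
    (ht : IsUnit (algebraMap K (Module.End K V) t + S)) :
    B.IsOrthogonal (cayley S t : Module.End K V) := by
  have hsurj := ((Module.End.isUnit_iff _).1 ht).2
  intro x y
  obtain ⟨x, rfl⟩ := hsurj x
  obtain ⟨y, rfl⟩ := hsurj y
  rw [← Module.End.mul_apply, ← Module.End.mul_apply, cayley_mul ht]
  have hxy : B (S x) y = -B x (S y) := by simpa using hS x y
  simp only [LinearMap.sub_apply, LinearMap.add_apply, Module.algebraMap_end_apply, map_sub,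
    map_add, map_smul, LinearMap.smul_apply, smul_eq_mul]
  linear_combination (-2 * t) * hxy

theorem LinearMap.IsOrthogonal.bijective [FiniteDimensional K V] (hB : B.SeparatingLeft)
    {C : Module.End K V} (hC : B.IsOrthogonal C) : Function.Bijective C := by
  have hinj : Function.Injective C := fun x y hxy =>
    sub_eq_zero.1 <| hB _ fun w => by rw [← hC, map_sub, hxy, sub_self, map_zero, zero_apply]
  exact ⟨hinj, injective_iff_surjective.1 hinj⟩

theorem infinite_setOf_isUnit_algebraMap_add [Infinite K] [FiniteDimensional K V]
    (S : Module.End K V) : {t : K | IsUnit (algebraMap K (Module.End K V) t + S)}.Infinite := by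
  have : {t : K | IsUnit (algebraMap K (Module.End K V) t + S)} = (spectrum K (-S))ᶜ := by
    ext t; simp [spectrum.mem_iff]
  rw [this]
  exact (Module.End.finite_spectrum _).infinite_compl

theorem infinite_setOf_isOrthogonal_commute [Infinite K] [NeZero (2 : K)] [FiniteDimensional K V]
    (hB : B.SeparatingLeft) {A S : Module.End K V} (hS : B.IsSkewAdjoint S) (hS0 : S ≠ 0)
    (hSA : Commute S A) :
    {C : Module.End K V | Function.Bijective C ∧ B.IsOrthogonal C ∧ Commute C A}.Infinite :=
  Set.infinite_of_injOn_mapsTo (cayley_injOn hS0)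
    (fun _ ht => ⟨(isOrthogonal_cayley hS ht).bijective hB, isOrthogonal_cayley hS ht,
      hSA.cayley_left _⟩)
    (infinite_setOf_isUnit_algebraMap_add S)

end BilinForm

section Skew

variable {K V : Type*} [Field K] [AddCommGroup V] [Module K V] {B : LinearMap.BilinForm K V}

theorem exists_ne_zero_isSkewAdjoint_commute (hBs : B.IsSymm) (hB : B.SeparatingLeft)
    {A : Module.End K V} (hA : B.IsSelfAdjoint A) (hker : 2 ≤ finrank K (LinearMap.ker A)) :
    ∃ S : Module.End K V, S ≠ 0 ∧ B.IsSkewAdjoint S ∧ Commute S A := by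
  have : Module.Finite K (LinearMap.ker A) := Module.finite_of_finrank_pos (R := K) (by omega)
  have : Nontrivial (LinearMap.ker A) := Module.nontrivial_of_finrank_pos (R := K) (by omega)
  obtain ⟨a, ha⟩ := exists_ne (0 : LinearMap.ker A)
  obtain ⟨b, hab⟩ := exists_linearIndependent_pair_of_one_lt_finrank (R := K) (by omega) ha
  have hAa : A a = 0 := a.2
  have hAb : A b = 0 := b.2
  refine ⟨(B a).smulRight (b : V) - (B b).smulRight (a : V), fun hS => ha ?_, fun v w => ?_, ?_⟩
  · have hBa : ∀ w, B a w = 0 := fun w =>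
      (LinearIndependent.pair_iff.1 hab (-B b w) (B a w) <| Subtype.ext <| by
        simpa [neg_add_eq_sub] using LinearMap.congr_fun hS w).2
    exact Subtype.ext (hB _ hBa)
  · simp only [LinearMap.sub_apply, LinearMap.smulRight_apply, Pi.neg_apply, map_sub, map_smul,
      map_neg, LinearMap.smul_apply, smul_eq_mul, hBs.eq v (a : V), hBs.eq v (b : V)]
    ring
  · ext v
    simp [hAa, hAb, ← hA _ v]

end Skew

/-- For a nilpotent self-adjoint endomorphism `A` of an `m`-dimensional
pseudo-Euclidean space `(V, B)`, the following are equivalent: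
(i) `A^(m-1) ≠ 0`; (ii) `rank A = m - 1`; (iii) `±Id` are the only linear isometries
commuting with `A`; (iv) `A` commutes with only finitely many linear isometries;
(v) `0` is the only skew-adjoint endomorphism commuting with `A`. -/
theorem generic_nilpotent_tfae
    (V : Type*) [AddCommGroup V] [Module ℝ V]
    (m : ℕ) (hm : 2 ≤ m) (hdim : finrank ℝ V = m)
    (B : V →ₗ[ℝ] V →ₗ[ℝ] ℝ)
    (hsymm : ∀ v w, B v w = B w v)
    (hnd : ∀ v, (∀ w, B v w = 0) → v = 0)
    (A : V →ₗ[ℝ] V)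
    (hsa : ∀ v w, B (A v) w = B v (A w))
    (hnil : A ^ m = 0) :
    [ A ^ (m - 1) ≠ 0,
      finrank ℝ (LinearMap.range A) = m - 1,
      ∀ C : V →ₗ[ℝ] V, Function.Bijective C → (∀ v w, B (C v) (C w) = B v w) →
        C ∘ₗ A = A ∘ₗ C → C = LinearMap.id ∨ C = - LinearMap.id,
      {C : V →ₗ[ℝ] V | Function.Bijective C ∧ (∀ v w, B (C v) (C w) = B v w) ∧
        C ∘ₗ A = A ∘ₗ C}.Finite,
      ∀ S : V →ₗ[ℝ] V, (∀ v w, B (S v) w = - B v (S w)) → S ∘ₗ A = A ∘ₗ S → S = 0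
    ].TFAE := by
  have : FiniteDimensional ℝ V := .of_finrank_pos (by omega)
  have : Nontrivial V := Module.nontrivial_of_finrank_pos (R := ℝ) (by omega)
  obtain ⟨n, rfl⟩ : ∃ n, m = n + 1 := ⟨m - 1, by omega⟩
  rw [Nat.add_sub_cancel]
  have hrank := LinearMap.finrank_range_add_finrank_ker A
  tfae_have 1 → 3 := fun hpow C _ hC hCA => by
    obtain ⟨v, hv⟩ : ∃ v, (A ^ n) v ≠ 0 := by simpa [LinearMap.ext_iff] using hpow
    exact eq_one_or_eq_neg_one_of_isOrthogonal_of_commute hnd hsa ⟨n + 1, hnil⟩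
      (Module.End.span_range_pow_apply_eq_top hdim hnil hv) hC hCA
  tfae_have 3 → 4 := fun h3 =>
    (Set.toFinite {LinearMap.id, -LinearMap.id}).subset fun C ⟨hCb, hC, hCA⟩ => h3 C hCb hC hCA
  tfae_have 4 → 5 := fun hfin S hS hSA => by
    by_contra hS0
    exact infinite_setOf_isOrthogonal_commute hnd (fun v w => by simp [hS v w]) hS0 hSA hfin
  tfae_have 5 → 2 := fun h5 => by
    by_contra hrange
    have := Module.End.finrank_ker_pos_of_isNilpotent (A := A) ⟨n + 1, hnil⟩
    obtain ⟨S, hS0, hS, hSA⟩ := exists_ne_zero_isSkewAdjoint_commute ⟨hsymm⟩ hnd hsa (by omega)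
    exact hS0 (h5 S (fun v w => by simpa using hS v w) hSA)
  tfae_have 2 → 1 := fun hrange hpow => by
    have hker : finrank ℝ (LinearMap.ker A) = 1 := by omega
    have := Module.End.finrank_ker_pow_le A n
    rw [hpow, LinearMap.ker_zero, finrank_top, hker, mul_one] at this
    omega
  tfae_finish
end

section
/- If two vectors v, v' lie in the kernel of a self-adjoint endomorphism A of a pseudo-Euclidean space and the only skew-adjoint endomorphism commuting with A is 0, then v and v' are linearly dependent. (Key point: the skew-adjoint endomorphism v ∧ v' = ⟨v,·⟩v' − ⟨v',·⟩v commutes with A.) -/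
/-- If `v, v'` lie in the kernel of a self-adjoint endomorphism `A` of a
pseudo-Euclidean space `(V, B)`, and `0` is the only skew-adjoint endomorphism
commuting with `A`, then `v` and `v'` are linearly dependent.  (The skew-adjoint
endomorphism `v ∧ v' = B(v,·)v' − B(v',·)v` commutes with `A`.) -/
theorem kernel_vectors_dependent_of_no_skew
    (V : Type*) [AddCommGroup V] [Module ℝ V] [FiniteDimensional ℝ V]
    (B : V →ₗ[ℝ] V →ₗ[ℝ] ℝ)
    (hsymm : ∀ v w, B v w = B w v)
    (hnd : ∀ v, (∀ w, B v w = 0) → v = 0)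
    (A : V →ₗ[ℝ] V)
    (hsa : ∀ v w, B (A v) w = B v (A w))
    (hskew : ∀ S : V →ₗ[ℝ] V, (∀ v w, B (S v) w = - B v (S w)) → S ∘ₗ A = A ∘ₗ S → S = 0)
    (v v' : V) (hv : A v = 0) (hv' : A v' = 0) :
    ¬ LinearIndependent ℝ ![v, v'] := by
  intro hli
  set S : V →ₗ[ℝ] V := (B v).smulRight v' - (B v').smulRight v with hSdef
  have hSapp : ∀ x, S x = B v x • v' - B v' x • v := fun x => rfl
  have hSskew : ∀ x w, B (S x) w = - B x (S w) := by
    intro x w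
    rw [hSapp, hSapp]
    simp only [map_sub, map_smul, LinearMap.sub_apply, LinearMap.smul_apply,
      smul_eq_mul]
    rw [hsymm x v, hsymm x v']
    ring
  have hScomm : S ∘ₗ A = A ∘ₗ S := by
    ext x
    simp only [LinearMap.comp_apply, hSapp, map_sub, map_smul, hv, hv',
      smul_zero, sub_zero, ← hsa, hv, hv', map_zero, LinearMap.zero_apply,
      zero_smul, sub_self]
  have hS0 : S = 0 := hskew S hSskew hScomm
  have key : ∀ x, B v x • v' - B v' x • v = 0 := by
    intro x
    rw [← hSapp, hS0]; rfl
  have hpair := LinearIndependent.pair_iff.mp hli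
  have hv0 : ∀ x, B v x = 0 := by
    intro x
    have h := key x
    have := hpair (- B v' x) (B v x) (by rw [neg_smul]; linear_combination (norm := module) h)
    exact this.2
  exact (hli.ne_zero 0 (by simpa using hnd v hv0))
end

section
/- If an irreducible GL(ℤ)-polynomial P has among its roots both a and a^k, for some complex number a ∉ {1, −1} and an integer k ∉ {0, 1, −1}, then every complex root of P is a root of unity. -/
/-!
Over `ℚ` the polynomial `P` stays irreducible (Gauss), so any two of its complex roots are
conjugate: both are images of the root of `ℚ[X]/(P)` under `ℚ`-algebra maps into `ℂ`. Since `a`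
and `a ^ k` are roots, so is `z ^ k` for every root `z`; hence `a, a ^ k, a ^ k ^ 2, …` all lie
in the finite root set. Two of them coincide, and as `|k| > 1` and `a ≠ 0` this forces
`a ^ N = 1` for some `N ≠ 0`. Being a root of unity transfers to every conjugate of `a`.
-/

/-- A `GL(ℤ)`-polynomial of degree `d`: integer coefficients, leading coefficient
`(-1)^d`, and constant term `1` or `-1`. -/
def IsGLZPoly (P : Polynomial ℤ) (d : ℕ) : Prop :=
  P.natDegree = d ∧ P.leadingCoeff = (-1) ^ d ∧ (P.coeff 0 = 1 ∨ P.coeff 0 = -1)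

open Polynomial

section ConjugateRoots

variable {K L : Type*} [Field K] [Field L] [Algebra K L] {Q : K[X]} {a z : L}

theorem AdjoinRoot.exists_algHom_root_eq (hz : aeval z Q = 0) :
    ∃ φ : AdjoinRoot Q →ₐ[K] L, φ (AdjoinRoot.root Q) = z :=
  ⟨AdjoinRoot.liftAlgHom Q (Algebra.ofId K L) z hz,
    AdjoinRoot.liftAlgHom_root Q (Algebra.ofId K L) z hz⟩

theorem aeval_zpow_eq_zero_of_irreducible (hQ : Irreducible Q) (k : ℤ) (ha : aeval a Q = 0)
    (hak : aeval (a ^ k) Q = 0) (hz : aeval z Q = 0) : aeval (z ^ k) Q = 0 := by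
  have := Fact.mk hQ
  obtain ⟨φa, hφa⟩ := AdjoinRoot.exists_algHom_root_eq ha
  obtain ⟨φz, hφz⟩ := AdjoinRoot.exists_algHom_root_eq hz
  have hroot : aeval (AdjoinRoot.root Q ^ k) Q = 0 := by
    apply φa.toRingHom.injective
    rw [AlgHom.toRingHom_eq_coe, RingHom.coe_coe, map_zero, ← aeval_algHom_apply, map_zpow₀,
      hφa, hak]
  rw [← hφz, ← map_zpow₀, aeval_algHom_apply, hroot, map_zero]

theorem IsOfFinOrder.of_aeval_eq_zero_of_irreducible (hQ : Irreducible Q) (ha : aeval a Q = 0)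
    (hz : aeval z Q = 0) (hfin : IsOfFinOrder a) : IsOfFinOrder z := by
  have := Fact.mk hQ
  obtain ⟨φa, hφa⟩ := AdjoinRoot.exists_algHom_root_eq ha
  obtain ⟨φz, hφz⟩ := AdjoinRoot.exists_algHom_root_eq hz
  have hroot : IsOfFinOrder (AdjoinRoot.root Q) := by
    rw [← (φa.toRingHom.injective : Function.Injective (φa : AdjoinRoot Q →* L)).isOfFinOrder_iff]
    simpa [hφa] using hfin
  simpa [hφz] using (φz : AdjoinRoot Q →* L).isOfFinOrder hroot

end ConjugateRoots

theorem isOfFinOrder_of_forall_zpow_pow_mem {G₀ : Type*} [GroupWithZero G₀] {a : G₀} (ha : a ≠ 0)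
    {k : ℤ} (hk : 1 < k.natAbs) {S : Set G₀} (hS : S.Finite) (hmem : ∀ n : ℕ, a ^ k ^ n ∈ S) :
    IsOfFinOrder a := by
  have := hS.to_subtype
  obtain ⟨m, n, hmn, heq⟩ :=
    Finite.exists_ne_map_eq_of_infinite fun n : ℕ => (⟨a ^ k ^ n, hmem n⟩ : S)
  rw [isOfFinOrder_iff_zpow_eq_one]
  refine ⟨k ^ m - k ^ n, sub_ne_zero.mpr ((Int.pow_right_injective hk).ne hmn), ?_⟩
  rw [zpow_sub₀ ha, Subtype.mk.inj heq, div_self (zpow_ne_zero _ ha)]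

theorem roots_of_unity_of_root_and_power_root_general (d : ℕ) (hd : 1 ≤ d)
    (P : Polynomial ℤ) (hP : IsGLZPoly P d) (hirr : Irreducible P)
    (a : ℂ) (k : ℤ) (hk0 : k ≠ 0) (hk1 : k ≠ 1) (hk2 : k ≠ -1)
    (hra : (P.map (Int.castRingHom ℂ)).IsRoot a)
    (hrak : (P.map (Int.castRingHom ℂ)).IsRoot (a ^ k)) :
    ∀ z : ℂ, (P.map (Int.castRingHom ℂ)).IsRoot z → ∃ n : ℕ, 0 < n ∧ z ^ n = 1 := by
  obtain ⟨hdeg, -, hc0⟩ := hP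
  set Q : ℚ[X] := P.map (Int.castRingHom ℚ)
  have hQ : Irreducible Q :=
    (IsPrimitive.Int.irreducible_iff_irreducible_map_cast (hirr.isPrimitive (by omega))).mp hirr
  have isRoot_iff (z : ℂ) : (P.map (Int.castRingHom ℂ)).IsRoot z ↔ aeval z Q = 0 := by
    change _ ↔ aeval z (P.map (algebraMap ℤ ℚ)) = 0
    rw [aeval_map_algebraMap, aeval_def, eval₂_eq_eval_map]
    rfl
  have hQa := (isRoot_iff a).mp hra
  have ha0 : a ≠ 0 := by
    rintro rfl
    have hc : P.coeff 0 = 0 := by simpa [coeff_zero_eq_eval_zero] using hra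
    rcases hc0 with hc' | hc' <;> simp [hc'] at hc
  have hpow (n : ℕ) : aeval (a ^ k ^ n) Q = 0 := by
    induction n with
    | zero => simpa using hQa
    | succ n ih =>
      rw [pow_succ, zpow_mul]
      exact aeval_zpow_eq_zero_of_irreducible hQ k hQa ((isRoot_iff _).mp hrak) ih
  have ha : IsOfFinOrder a := isOfFinOrder_of_forall_zpow_pow_mem ha0 (by omega)
    (Q.rootSet_finite ℂ) fun n => (mem_rootSet_of_ne hQ.ne_zero).mpr (hpow n)
  intro z hz
  exact isOfFinOrder_iff_pow_eq_one.mp <|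
    ha.of_aeval_eq_zero_of_irreducible hQ hQa ((isRoot_iff z).mp hz)

/-- If an irreducible `GL(ℤ)`-polynomial `P` has among its complex roots both `a` and
`a^k`, for some `a ∉ {1, -1}` and an integer `k ∉ {0, 1, -1}`, then every complex root
of `P` is a root of unity. -/
theorem roots_of_unity_of_root_and_power_root (d : ℕ) (hd : 1 ≤ d)
    (P : Polynomial ℤ) (hP : IsGLZPoly P d) (hirr : Irreducible P)
    (a : ℂ) (ha1 : a ≠ 1) (ha2 : a ≠ -1)
    (k : ℤ) (hk0 : k ≠ 0) (hk1 : k ≠ 1) (hk2 : k ≠ -1)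
    (hra : (P.map (Int.castRingHom ℂ)).IsRoot a)
    (hrak : (P.map (Int.castRingHom ℂ)).IsRoot (a ^ k)) :
    ∀ z : ℂ, (P.map (Int.castRingHom ℂ)).IsRoot z → ∃ n : ℕ, 0 < n ∧ z ^ n = 1 :=
  roots_of_unity_of_root_and_power_root_general d hd P hP hirr a k hk0 hk1 hk2 hra hrak
end

section
/- If an irreducible GL(ℤ)-polynomial P has two roots of the form a^k and a^ℓ for some a ∈ ℂ \ {−1, 0, 1} and two distinct integers k, ℓ ≥ 2, then all complex roots of P have modulus 1. -/
open Polynomial IntermediateField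

theorem Polynomial.isPrimitive_of_isUnit_leadingCoeff {R : Type*} [CommSemiring R] {p : R[X]}
    (h : IsUnit p.leadingCoeff) : p.IsPrimitive :=
  fun r hr ↦ isUnit_of_dvd_unit ((C_dvd_iff_dvd_coeff r p).mp hr _) h

theorem Polynomial.isRoot_map_int_iff_aeval_map_rat {A : Type*} [CommRing A] [Algebra ℚ A]
    (P : ℤ[X]) (z : A) :
    (P.map (Int.castRingHom A)).IsRoot z ↔ aeval z (P.map (Int.castRingHom ℚ)) = 0 := by
  rw [← algebraMap_int_eq ℚ, aeval_map_algebraMap, aeval_def, algebraMap_int_eq, ← eval_map]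
  rfl

theorem isConjRoot_of_irreducible_of_aeval_eq_zero {K A : Type*} [Field K] [CommRing A]
    [IsDomain A] [Algebra K A] {p : K[X]} (hp : Irreducible p) {x y : A} (hx : aeval x p = 0)
    (hy : aeval y p = 0) : IsConjRoot K x y := by
  refine isConjRoot_of_aeval_eq_zero (isAlgebraic_iff_isIntegral.mp ⟨p, hp.ne_zero, hx⟩) ?_
  rw [← minpoly.eq_of_irreducible hp hx, map_mul, hy, zero_mul]

theorem IsConjRoot.pow {K L : Type*} [Field K] [CommRing L] [IsDomain L] [Algebra K L]
    {a c : L} (ha : IsIntegral K a) (h : IsConjRoot K a c) (j : ℕ) :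
    IsConjRoot K (a ^ j) (c ^ j) := by
  refine isConjRoot_of_aeval_eq_zero (ha.pow j) ?_
  have hdvd : minpoly K a ∣ (minpoly K (a ^ j)).comp (X ^ j) :=
    minpoly.dvd K a (by rw [aeval_comp, aeval_X_pow, minpoly.aeval])
  simpa [aeval_comp] using aeval_eq_zero_of_dvd_aeval_eq_zero hdvd h.aeval_eq_zero

theorem IsConjRoot.exists_isConjRoot_pow_eq {K L : Type*} [Field K] [Field L] [Algebra K L]
    [IsAlgClosed L] {a z : L} (ha : IsIntegral K a) {j : ℕ} (hz : IsConjRoot K (a ^ j) z) :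
    ∃ c, IsConjRoot K a c ∧ c ^ j = z := by
  have hsplit : ∀ s ∈ ({a} : Set L),
      IsIntegral K s ∧ ((minpoly K s).map (algebraMap K L)).Splits := by
    rintro s rfl
    exact ⟨ha, IsAlgClosed.splits _⟩
  obtain ⟨φ, hφ⟩ := exists_algHom_adjoin_of_splits_of_aeval hsplit
    (pow_mem (mem_adjoin_simple_self K a) j) hz.aeval_eq_zero
  refine ⟨φ (AdjoinSimple.gen K a), ?_, ?_⟩
  · exact isConjRoot_of_aeval_eq_zero ha (by rw [aeval_algHom_apply, aeval_gen_minpoly, map_zero])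
  · rw [← map_pow, ← hφ]
    rfl

theorem Finset.eq_one_of_forall_exists_pow_eq_pow {α : Type*} [Field α] [LinearOrder α]
    [IsStrictOrderedRing α] {s : Finset α} {k l : ℕ} (hkl : k < l) (hpos : ∀ x ∈ s, 0 < x)
    (h : ∀ x ∈ s, ∃ y ∈ s, y ^ k = x ^ l) : ∀ x ∈ s, x = 1 := by
  intro x hx
  have hne : s.Nonempty := ⟨x, hx⟩
  have hmax : s.max' hne ≤ 1 := by
    obtain ⟨y, hy, hyx⟩ := h _ (s.max'_mem hne)
    by_contra! hgt
    have := pow_le_pow_left₀ (hpos y hy).le (s.le_max' y hy) k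
    have := pow_lt_pow_right₀ hgt hkl
    linarith
  have hmin : 1 ≤ s.min' hne := by
    obtain ⟨y, hy, hyx⟩ := h _ (s.min'_mem hne)
    by_contra! hlt
    have := pow_le_pow_left₀ (hpos _ (s.min'_mem hne)).le (s.min'_le y hy) k
    have := pow_lt_pow_right_of_lt_one₀ (hpos _ (s.min'_mem hne)) hlt hkl
    linarith
  linarith [s.le_max' x hx, s.min'_le x hx]

theorem norm_eq_one_of_isConjRoot_pow {K L : Type*} [Field K] [NormedField L] [IsAlgClosed L]
    [Algebra K L] {a z : L} (ha0 : a ≠ 0) (ha : IsIntegral K a) {k l : ℕ} (hkl : k < l)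
    (hkl_conj : IsConjRoot K (a ^ k) (a ^ l)) (hz : IsConjRoot K (a ^ k) z) : ‖z‖ = 1 := by
  have hstep : ∀ b, IsConjRoot K a b → ∃ c, IsConjRoot K a c ∧ ‖c‖ ^ k = ‖b‖ ^ l := by
    intro b hb
    obtain ⟨c, hc, hck⟩ := (hkl_conj.trans (hb.pow ha l)).exists_isConjRoot_pow_eq ha
    exact ⟨c, hc, by rw [← norm_pow, hck, norm_pow]⟩
  have hnorm : ∀ b, IsConjRoot K a b → ‖b‖ = 1 := by
    classical
    set s := ((minpoly K a).aroots L).toFinset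
    have hmem : ∀ b, IsConjRoot K a b ↔ b ∈ s := fun b ↦ by
      rw [Multiset.mem_toFinset, isConjRoot_iff_mem_minpoly_aroots ha]
    have := Finset.eq_one_of_forall_exists_pow_eq_pow (s := s.image (‖·‖)) hkl ?_ ?_
    · exact fun b hb ↦ this _ (Finset.mem_image_of_mem _ ((hmem b).1 hb))
    · simp only [Finset.forall_mem_image, ← hmem]
      exact fun c hc ↦ norm_pos_iff.2 (hc.ne_zero ha0)
    · simpa only [Finset.forall_mem_image, Finset.exists_mem_image, ← hmem] using hstep
  obtain ⟨c, hc, rfl⟩ := hz.exists_isConjRoot_pow_eq ha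
  rw [norm_pow, hnorm c hc, one_pow]

theorem roots_modulus_one_of_two_power_roots_general (d : ℕ)
    (P : Polynomial ℤ) (hP : IsGLZPoly P d) (hirr : Irreducible P)
    (a : ℂ) (ha0 : a ≠ 0)
    (k l : ℕ) (hk : 2 ≤ k) (hl : 2 ≤ l) (hkl : k ≠ l)
    (hrk : (P.map (Int.castRingHom ℂ)).IsRoot (a ^ k))
    (hrl : (P.map (Int.castRingHom ℂ)).IsRoot (a ^ l)) :
    ∀ z : ℂ, (P.map (Int.castRingHom ℂ)).IsRoot z → ‖z‖ = 1 := by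
  intro z hz
  wlog hlt : k < l generalizing k l
  · exact this l k hl hk hkl.symm hrl hrk (by omega)
  have hunit : IsUnit P.leadingCoeff := hP.2.1 ▸ isUnit_neg_one.pow d
  have hq : Irreducible (P.map (Int.castRingHom ℚ)) :=
    (IsPrimitive.Int.irreducible_iff_irreducible_map_cast
      (isPrimitive_of_isUnit_leadingCoeff hunit)).mp hirr
  simp only [isRoot_map_int_iff_aeval_map_rat] at hrk hrl hz
  have ha : IsIntegral ℚ a :=
    (isAlgebraic_iff_isIntegral.mp ⟨_, hq.ne_zero, hrk⟩).of_pow (by omega)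
  exact norm_eq_one_of_isConjRoot_pow ha0 ha hlt
    (isConjRoot_of_irreducible_of_aeval_eq_zero hq hrk hrl)
    (isConjRoot_of_irreducible_of_aeval_eq_zero hq hrk hz)

/-- If an irreducible `GL(ℤ)`-polynomial `P` has two roots of the form `a^k` and `a^ℓ`
for some `a ∈ ℂ \ {-1, 0, 1}` and two distinct integers `k, ℓ ≥ 2`, then all complex
roots of `P` have modulus `1`. -/
theorem roots_modulus_one_of_two_power_roots (d : ℕ) (hd : 1 ≤ d)
    (P : Polynomial ℤ) (hP : IsGLZPoly P d) (hirr : Irreducible P)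
    (a : ℂ) (ha0 : a ≠ 0) (ha1 : a ≠ 1) (ha2 : a ≠ -1)
    (k l : ℕ) (hk : 2 ≤ k) (hl : 2 ≤ l) (hkl : k ≠ l)
    (hrk : (P.map (Int.castRingHom ℂ)).IsRoot (a ^ k))
    (hrl : (P.map (Int.castRingHom ℂ)).IsRoot (a ^ l)) :
    ∀ z : ℂ, (P.map (Int.castRingHom ℂ)).IsRoot z → ‖z‖ = 1 :=
  roots_modulus_one_of_two_power_roots_general d P hP hirr a ha0 k l hk hl hkl hrk hrl
end

section
/- If all complex roots of an irreducible GL(ℤ)-polynomial have modulus 1, then they are all roots of unity (Kronecker's theorem for GL(ℤ)-polynomials). -/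
open Polynomial IntermediateField

theorem isIntegral_of_isUnit_leadingCoeff {R S : Type*} [CommRing R] [CommRing S] [Algebra R S]
    {p : R[X]} {x : S} (hp : aeval x p = 0) (hu : IsUnit p.leadingCoeff) : IsIntegral R x := by
  simpa [smul_smul] using (isIntegral_leadingCoeff_smul _ _ hp).smul ((hu.unit⁻¹ : Rˣ) : R)

theorem exists_pow_eq_one_of_isIntegral_of_forall_root_norm_eq_one {q : ℤ[X]} {z : ℂ}
    (hz : IsIntegral ℤ z) (hqz : aeval z q = 0) (hq : ∀ w : ℂ, aeval w q = 0 → ‖w‖ = 1) :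
    ∃ n : ℕ, 0 < n ∧ z ^ n = 1 := by
  let K : IntermediateField ℚ ℂ := ℚ⟮z⟯
  have : FiniteDimensional ℚ K := adjoin.finiteDimensional hz.tower_top
  have : NumberField K := ⟨⟩
  let x : K := AdjoinSimple.gen ℚ z
  have hx : algebraMap K ℂ x = z := AdjoinSimple.algebraMap_gen ℚ z
  have hxi : IsIntegral ℤ x := by
    rwa [← isIntegral_algebraMap_iff (algebraMap K ℂ).injective, hx]
  have hqx : aeval x q = 0 := by
    apply (algebraMap K ℂ).injective
    rw [← aeval_algebraMap_apply, hx, hqz, map_zero]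
  have hconj (φ : K →+* ℂ) : ‖φ x‖ = 1 :=
    hq _ (by rw [← φ.toIntAlgHom_coe, aeval_algHom_apply, hqx, map_zero])
  obtain ⟨n, hn, hxn⟩ := NumberField.Embeddings.pow_eq_one_of_norm_eq_one K ℂ hxi hconj
  exact ⟨n, hn, by rw [← hx, ← map_pow, hxn, map_one]⟩

theorem IsGLZPoly.isUnit_leadingCoeff {P : ℤ[X]} {d : ℕ} (hP : IsGLZPoly P d) :
    IsUnit P.leadingCoeff :=
  hP.2.1 ▸ isUnit_one.neg.pow d

theorem kronecker_glzPoly_general (d : ℕ)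
    (P : Polynomial ℤ) (hP : IsGLZPoly P d)
    (hmod : ∀ z : ℂ, (P.map (Int.castRingHom ℂ)).IsRoot z → ‖z‖ = 1) :
    ∀ z : ℂ, (P.map (Int.castRingHom ℂ)).IsRoot z → ∃ n : ℕ, 0 < n ∧ z ^ n = 1 := by
  have isRoot_iff (w : ℂ) : (P.map (Int.castRingHom ℂ)).IsRoot w ↔ aeval w P = 0 := by
    rw [IsRoot.def, ← algebraMap_int_eq, eval_map_algebraMap]
  intro z hz
  rw [isRoot_iff] at hz
  exact exists_pow_eq_one_of_isIntegral_of_forall_root_norm_eq_one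
    (isIntegral_of_isUnit_leadingCoeff hz hP.isUnit_leadingCoeff) hz
    fun w hw ↦ hmod w ((isRoot_iff w).mpr hw)

/-- Kronecker's theorem for `GL(ℤ)`-polynomials: if all complex roots of an irreducible
`GL(ℤ)`-polynomial have modulus `1`, then they are all roots of unity. -/
theorem kronecker_glzPoly (d : ℕ) (hd : 1 ≤ d)
    (P : Polynomial ℤ) (hP : IsGLZPoly P d) (hirr : Irreducible P)
    (hmod : ∀ z : ℂ, (P.map (Int.castRingHom ℂ)).IsRoot z → ‖z‖ = 1) :
    ∀ z : ℂ, (P.map (Int.castRingHom ℂ)).IsRoot z → ∃ n : ℕ, 0 < n ∧ z ^ n = 1 :=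
  kronecker_glzPoly_general d P hP hmod
end

section
/- The only irreducible GL(ℤ)-polynomials whose complex roots generate a cyclic multiplicative subgroup of ℂ \ {0} are the (up-to-sign) cyclotomic polynomials and the quadratic GL(ℤ)-polynomials. -/
open Polynomial

theorem Subgroup.exists_zpow_eq_of_isCyclic_closure {G : Type*} [Group G] {S : Set G}
    (h : IsCyclic (closure S)) : ∃ g : G, ∀ s ∈ S, ∃ k : ℤ, g ^ k = s := by
  obtain ⟨g, hg⟩ := (closure S).isCyclic_iff_exists_zpowers_eq_top.mp h
  exact ⟨g, fun s hs => mem_zpowers_iff.mp (hg ▸ subset_closure hs)⟩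

theorem IsIntegral.exists_pow_eq_one_of_norm_eq_one {x : ℂ} (hx : IsIntegral ℤ x)
    (h : ∀ y : ℂ, aeval y (minpoly ℚ x) = 0 → ‖y‖ = 1) :
    ∃ n : ℕ, 0 < n ∧ x ^ n = 1 := by
  let K := IntermediateField.adjoin ℚ ({x} : Set ℂ)
  have : FiniteDimensional ℚ K := IntermediateField.adjoin.finiteDimensional hx.tower_top
  have : NumberField K := ⟨⟩
  have hgen : IsIntegral ℤ (IntermediateField.AdjoinSimple.gen ℚ x) :=
    (isIntegral_algHom_iff (K.val.restrictScalars ℤ) K.val.injective).mp hx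
  obtain ⟨n, hn, hxn⟩ := NumberField.Embeddings.pow_eq_one_of_norm_eq_one K ℂ hgen fun φ => by
    have hφ := congrArg φ (IntermediateField.aeval_gen_minpoly ℚ x)
    rw [map_zero, aeval_def, hom_eval₂, RingHom.ext_rat (φ.comp _) (algebraMap ℚ ℂ)] at hφ
    exact h _ hφ
  exact ⟨n, hn, by simpa using congrArg K.val hxn⟩

/-- With `a` of least and `m` of largest absolute value, `e * a = m * m` forces `|m| ≤ |a|`,
so every element is `±a`. -/
theorem Int.card_le_two_of_exists_mul_eq_mul (E : Finset ℤ) (h0 : ∀ e ∈ E, e ≠ 0)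
    (hcl : ∀ a ∈ E, ∀ b ∈ E, ∀ c ∈ E, ∃ e ∈ E, e * a = c * b) : E.card ≤ 2 := by
  rcases E.eq_empty_or_nonempty with rfl | hne
  · simp
  obtain ⟨m, hm, hmax⟩ := E.exists_max_image natAbs hne
  obtain ⟨a, ha, hmin⟩ := E.exists_min_image natAbs hne
  obtain ⟨e, he, hea⟩ := hcl a ha m hm m hm
  have hma : m.natAbs ≤ a.natAbs := by
    refine Nat.le_of_mul_le_mul_left ?_ (natAbs_pos.mpr (h0 m hm))
    calc m.natAbs * m.natAbs = e.natAbs * a.natAbs := by rw [← natAbs_mul, ← natAbs_mul, hea]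
      _ ≤ m.natAbs * a.natAbs := Nat.mul_le_mul_right _ (hmax e he)
  have hsub : E ⊆ {a, -a} := fun x hx => by
    have : x.natAbs = a.natAbs := le_antisymm ((hmax x hx).trans hma) (hmin x hx)
    rcases natAbs_eq_natAbs_iff.mp this with rfl | rfl <;> simp
  exact (Finset.card_le_card hsub).trans Finset.card_le_two

section Conjugates

variable {F L : Type*} [Field F] [Field L] [Algebra F L] {Q : F[X]}

theorem Irreducible.pow_eq_one_of_aeval_eq_zero (hQ : Irreducible Q) {z w : L}
    (hz : aeval z Q = 0) (hw : aeval w Q = 0) {n : ℕ} (hzn : z ^ n = 1) : w ^ n = 1 := by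
  have hmin : minpoly F w = minpoly F z :=
    (minpoly.eq_of_irreducible hQ hw).symm.trans (minpoly.eq_of_irreducible hQ hz)
  have : aeval w (X ^ n - 1 : F[X]) = 0 :=
    minpoly.dvd_iff.mp (hmin ▸ minpoly.dvd_iff.mpr (by simp [hzn]))
  simpa [sub_eq_zero] using this

/-- `w` is the image of `b` under an embedding of `F⟮a, b⟯` into `L` sending `a` to `c`. -/
theorem Irreducible.exists_aeval_eq_zero_zpow_eq [IsAlgClosed L] (hQ : Irreducible Q)
    {a b c : L} (ha : aeval a Q = 0) (hb : aeval b Q = 0) (hc : aeval c Q = 0) {m n : ℤ}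
    (hab : a ^ m = b ^ n) : ∃ w, aeval w Q = 0 ∧ c ^ m = w ^ n := by
  have hsplit : ∀ s ∈ ({a, b} : Set L),
      IsIntegral F s ∧ ((minpoly F s).map (algebraMap F L)).Splits := by
    rintro s (rfl | rfl) <;>
      exact ⟨IsAlgebraic.isIntegral ⟨Q, hQ.ne_zero, ‹_›⟩, IsAlgClosed.splits _⟩
  have hca : aeval c (minpoly F a) = 0 := by
    rw [← minpoly.eq_of_irreducible hQ ha, map_mul, hc, zero_mul]
  let K := IntermediateField.adjoin F ({a, b} : Set L)
  have haK : a ∈ K := IntermediateField.subset_adjoin F _ (Set.mem_insert a {b})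
  have hbK : b ∈ K := IntermediateField.subset_adjoin F _ (Set.mem_insert_of_mem a rfl)
  obtain ⟨φ, hφ⟩ := IntermediateField.exists_algHom_adjoin_of_splits_of_aeval hsplit haK hca
  refine ⟨φ ⟨b, hbK⟩, ?_, ?_⟩
  · have hbK0 := IntermediateField.aeval_coe K (⟨b, hbK⟩ : K) Q
    rw [hb, eq_comm, ZeroMemClass.coe_eq_zero] at hbK0
    rw [aeval_algHom_apply, hbK0, map_zero]
  · rw [← hφ, ← map_zpow₀, ← map_zpow₀]
    congr 1
    exact K.val.injective (by simpa using hab)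

end Conjugates

section Exponents

variable {Q : ℚ[X]} {g : ℂ} {k : ℂ → ℤ}

/-- Conjugate `a ^ k b = b ^ k a` by `a ↦ c` and compare absolute values; `‖g‖ ≠ 1` makes
`n ↦ ‖g‖ ^ n` injective. -/
theorem exists_aeval_eq_zero_mul_eq_mul_of_forall_zpow_eq (hQ : Irreducible Q) (hg0 : g ≠ 0)
    (hg1 : ‖g‖ ≠ 1) (hk : ∀ z, aeval z Q = 0 → g ^ k z = z) {a b c : ℂ}
    (ha : aeval a Q = 0) (hb : aeval b Q = 0) (hc : aeval c Q = 0) :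
    ∃ w, aeval w Q = 0 ∧ k w * k a = k c * k b := by
  have hab : a ^ k b = b ^ k a :=
    calc a ^ k b = (g ^ k a) ^ k b := by rw [hk a ha]
      _ = (g ^ k b) ^ k a := by rw [← zpow_mul, ← zpow_mul, mul_comm]
      _ = b ^ k a := by rw [hk b hb]
  obtain ⟨w, hw, hcw⟩ := hQ.exists_aeval_eq_zero_zpow_eq ha hb hc hab
  refine ⟨w, hw, zpow_right_injective₀ (norm_pos_iff.mpr hg0) hg1 ?_⟩
  dsimp only
  rw [← norm_zpow, ← norm_zpow, zpow_mul, zpow_mul, hk w hw, hk c hc, hcw]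

theorem natDegree_le_two_of_forall_zpow_eq (hQ : Irreducible Q) (hg0 : g ≠ 0) (hg1 : ‖g‖ ≠ 1)
    (hk : ∀ z, aeval z Q = 0 → g ^ k z = z) (hk0 : ∀ z, aeval z Q = 0 → k z ≠ 0) :
    Q.natDegree ≤ 2 := by
  classical
  set R := (Q.aroots ℂ).toFinset
  have hmem : ∀ {z}, z ∈ R ↔ aeval z Q = 0 := by simp [R, hQ.ne_zero]
  have hR : R.card = Q.natDegree := by
    simpa [rootSet_def] using
      card_rootSet_eq_natDegree (K := ℂ) hQ.separable (IsAlgClosed.splits _)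
  have hinj : Set.InjOn k R := fun z hz w hw hzw => by
    rw [← hk z (hmem.mp hz), ← hk w (hmem.mp hw), hzw]
  rw [← hR, ← Finset.card_image_of_injOn hinj]
  refine Int.card_le_two_of_exists_mul_eq_mul _ ?_ ?_
  · simp only [Finset.mem_image]
    rintro _ ⟨z, hz, rfl⟩
    exact hk0 z (hmem.mp hz)
  · simp only [Finset.mem_image, exists_exists_and_eq_and]
    rintro _ ⟨a, ha, rfl⟩ _ ⟨b, hb, rfl⟩ _ ⟨c, hc, rfl⟩
    obtain ⟨w, hw, hrel⟩ := exists_aeval_eq_zero_mul_eq_mul_of_forall_zpow_eq hQ hg0 hg1 hk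
      (hmem.mp ha) (hmem.mp hb) (hmem.mp hc)
    exact ⟨w, hmem.mpr hw, hrel⟩

theorem natDegree_le_two_of_isCyclic_closure (hQ : Irreducible Q) (h0 : aeval (0 : ℂ) Q ≠ 0)
    (hint : ∀ z : ℂ, aeval z Q = 0 → IsIntegral ℤ z)
    (hcyc : IsCyclic (Subgroup.closure {z : ℂˣ | aeval (z : ℂ) Q = 0})) {z₀ : ℂ}
    (hz₀ : aeval z₀ Q = 0) (hz₀n : ∀ n : ℕ, 0 < n → z₀ ^ n ≠ 1) : Q.natDegree ≤ 2 := by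
  obtain ⟨g, hg⟩ := Subgroup.exists_zpow_eq_of_isCyclic_closure hcyc
  have hk (z : ℂ) (hz : aeval z Q = 0) : ∃ n : ℤ, (g : ℂ) ^ n = z := by
    obtain ⟨n, hn⟩ := hg (Units.mk0 z (by rintro rfl; exact h0 hz)) hz
    exact ⟨n, by simpa using congrArg Units.val hn⟩
  choose! k hk using hk
  have hg1 : ‖(g : ℂ)‖ ≠ 1 := fun h => by
    obtain ⟨n, hn, hz₀n'⟩ := (hint z₀ hz₀).exists_pow_eq_one_of_norm_eq_one fun y hy => by
      have hyQ : aeval y Q = 0 := by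
        rw [minpoly.Irreducible.eq_minpoly hQ hz₀, map_mul, hy, mul_zero]
      rw [← hk y hyQ, norm_zpow, h, one_zpow]
    exact hz₀n n hn hz₀n'
  refine natDegree_le_two_of_forall_zpow_eq hQ g.ne_zero hg1 hk fun z hz hkz => ?_
  have hz1 : z ^ 1 = 1 := by rw [pow_one, ← hk z hz, hkz, zpow_zero]
  exact hz₀n 1 one_pos (hQ.pow_eq_one_of_aeval_eq_zero hz hz₀ hz1)

end Exponents

namespace IsGLZPoly

variable {P : ℤ[X]} {d : ℕ}

theorem isUnit_leadingCoeff_s17 (hP : IsGLZPoly P d) : IsUnit P.leadingCoeff := by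
  rw [hP.2.1]
  exact isUnit_neg_one.pow d

theorem isPrimitive (hP : IsGLZPoly P d) : P.IsPrimitive := fun r ⟨q, hq⟩ => by
  have := hP.isUnit_leadingCoeff_s17
  rw [hq, leadingCoeff_mul, leadingCoeff_C] at this
  exact isUnit_of_mul_isUnit_left this

theorem aeval_zero_ne_zero {A : Type*} [CommRing A] [Nontrivial A] (hP : IsGLZPoly P d) :
    aeval (0 : A) P ≠ 0 := by
  rw [← coeff_zero_eq_aeval_zero']
  rcases hP.2.2 with h | h <;> simp [h]

theorem isIntegral_of_aeval_eq_zero {A : Type*} [CommRing A] (hP : IsGLZPoly P d) {z : A}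
    (hz : aeval z P = 0) : IsIntegral ℤ z :=
  ⟨_, monic_of_isUnit_leadingCoeff_inv_smul hP.isUnit_leadingCoeff_s17, by
    rw [← aeval_def, Units.smul_def, map_smul, hz, smul_zero]⟩

theorem sq_eq_one_of_aeval_eq_zero {A : Type*} [CommRing A] (hP : IsGLZPoly P 1) {z : A}
    (hz : aeval z P = 0) : z ^ 2 = 1 := by
  obtain ⟨hdeg, hlead, hconst⟩ := hP
  rw [eq_X_add_C_of_natDegree_le_one hdeg.le, ← hdeg, ← leadingCoeff, hlead] at hz
  simp only [pow_one, eq_intCast, Int.cast_neg, Int.cast_one, neg_mul, one_mul, map_add,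
    aeval_neg, aeval_X, map_intCast] at hz
  rw [show z = P.coeff 0 by linear_combination -hz]
  rcases hconst with h | h <;> simp [h]

end IsGLZPoly

theorem cyclic_root_group_glzPoly_general (d : ℕ)
    (P : Polynomial ℤ) (hP : IsGLZPoly P d) (hirr : Irreducible P)
    (hcyc : IsCyclic
      ↥(Subgroup.closure {z : ℂˣ | (P.map (Int.castRingHom ℂ)).IsRoot (z : ℂ)})) :
    (∀ z : ℂ, (P.map (Int.castRingHom ℂ)).IsRoot z → ∃ n : ℕ, 0 < n ∧ z ^ n = 1) ∨
      d = 2 := by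
  set Q := P.map (algebraMap ℤ ℚ)
  have hQ : Irreducible Q :=
    (IsPrimitive.Int.irreducible_iff_irreducible_map_cast hP.isPrimitive).mp hirr
  have hQP (z : ℂ) : aeval z Q = aeval z P := aeval_map_algebraMap ℚ z P
  have hroot (z : ℂ) : (P.map (Int.castRingHom ℂ)).IsRoot z ↔ aeval z Q = 0 := by
    rw [hQP, aeval_def, algebraMap_int_eq, IsRoot, eval_map]
  have hS : {z : ℂˣ | aeval (z : ℂ) Q = 0} =
      {z : ℂˣ | (P.map (Int.castRingHom ℂ)).IsRoot (z : ℂ)} := Set.ext fun z => (hroot z).symm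
  rw [← hS] at hcyc
  simp only [hroot]
  by_cases hA : ∀ z : ℂ, aeval z Q = 0 → ∃ n : ℕ, 0 < n ∧ z ^ n = 1
  · exact Or.inl hA
  push Not at hA
  obtain ⟨z₀, hz₀, hz₀n⟩ := hA
  have hd2 := natDegree_le_two_of_isCyclic_closure hQ (by rw [hQP]; exact hP.aeval_zero_ne_zero)
    (fun z hz => hP.isIntegral_of_aeval_eq_zero ((hQP z).symm.trans hz)) hcyc hz₀ hz₀n
  have hd1 : d ≠ 1 := by
    rintro rfl
    exact hz₀n 2 two_pos (hP.sq_eq_one_of_aeval_eq_zero ((hQP z₀).symm.trans hz₀))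
  have hd : Q.natDegree = d := by
    rw [natDegree_map_eq_of_injective (algebraMap ℤ ℚ).injective_int, hP.1]
  have hd0 := hQ.natDegree_pos
  right
  omega

/-- The only irreducible `GL(ℤ)`-polynomials whose complex roots generate a cyclic
multiplicative subgroup of `ℂ \ {0}` are the cyclotomic ones (all roots are roots of
unity) and the quadratic ones. -/
theorem cyclic_root_group_glzPoly (d : ℕ) (hd : 1 ≤ d)
    (P : Polynomial ℤ) (hP : IsGLZPoly P d) (hirr : Irreducible P)
    (hcyc : IsCyclic
      ↥(Subgroup.closure {z : ℂˣ | (P.map (Int.castRingHom ℂ)).IsRoot (z : ℂ)})) :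
    (∀ z : ℂ, (P.map (Int.castRingHom ℂ)).IsRoot z → ∃ n : ℕ, 0 < n ∧ z ^ n = 1) ∨
      d = 2 :=
  cyclic_root_group_glzPoly_general d P hP hirr hcyc
end

section
/- Fix integers m ≥ 2 and k, let V = {1, ..., 2m}, define E(a) = m − (−1)^a k − a and Φ(a) = 2m − 2(−1)^a k − a, and set a_1 = m + (−1)^{m+k} k − 1 and a_0 = m − (−1)^{m+k} k. Then there is no subset S ⊆ V satisfying all of: (a) a_1 ∈ S and Φ(a_1) ∉ S; (b) a_0 ∈ S if and only if m is even; (c) for all a, b ∈ V with a + b = 2m + 1, exactly one of a, b lies in S; (d) for every a ∈ S \ {a_1} there exists b ∈ S with E(b) = −E(a); (e) |S ∩ {1, ..., 2j}| ≤ j for every j ∈ {1, ..., m}. -/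
/-- Combinatorial non-existence theorem: for integers `m ≥ 2` and `k`, with
`E a = m - (-1)^a k - a`, `Φ a = 2m - 2(-1)^a k - a`, `a₁ = m + (-1)^(m+k) k - 1`,
`a₀ = m - (-1)^(m+k) k`, there is no subset `S ⊆ {1, ..., 2m}` satisfying:
(a) `a₁ ∈ S` and `Φ a₁ ∉ S`; (b) `a₀ ∈ S` iff `m` is even;
(c) for `a + b = 2m + 1` in `{1,...,2m}`, exactly one of `a, b` lies in `S`;
(d) for every `a ∈ S \ {a₁}` there is `b ∈ S` with `E b = -E a`;
(e) `|S ∩ {1,...,2j}| ≤ j` for all `j = 1, ..., m`. -/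
theorem no_combinatorial_selector
    (m k : ℤ) (hm : 2 ≤ m)
    (E Φ : ℤ → ℤ)
    (hE : ∀ a, E a = m - (if Even a then k else -k) - a)
    (hΦ : ∀ a, Φ a = 2 * m - (if Even a then 2 * k else -(2 * k)) - a)
    (a₀ a₁ : ℤ)
    (ha₁ : a₁ = m + (if Even (m + k) then k else -k) - 1)
    (ha₀ : a₀ = m - (if Even (m + k) then k else -k)) :
    ¬ ∃ S : Finset ℤ, S ⊆ Finset.Icc 1 (2 * m) ∧
      (a₁ ∈ S ∧ Φ a₁ ∉ S) ∧
      (a₀ ∈ S ↔ Even m) ∧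
      (∀ a b : ℤ, 1 ≤ a → a ≤ 2 * m → 1 ≤ b → b ≤ 2 * m → a + b = 2 * m + 1 →
        (a ∈ S ↔ b ∉ S)) ∧
      (∀ a ∈ S, a ≠ a₁ → ∃ b ∈ S, E b = -E a) ∧
      (∀ j : ℤ, 1 ≤ j → j ≤ m →
        ((S ∩ Finset.Icc 1 (2 * j)).card : ℤ) ≤ j) := by
  subst ha₁ ha₀
  rintro ⟨S, hsub, ⟨ha1S, hPa1⟩, hbS, hpair, hclose, hpre⟩
  set c : ℤ := if Even (m + k) then k else -k with hcdef
  have hcc : ((m + k) % 2 = 0 ∧ c = k) ∨ ((m + k) % 2 = 1 ∧ c = -k) := by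
    by_cases h : Even (m + k)
    · exact Or.inl ⟨Int.even_iff.mp h, by rw [hcdef, if_pos h]⟩
    · exact Or.inr ⟨Int.not_even_iff.mp h, by rw [hcdef, if_neg h]⟩
  -- Φ on the parity class of a₀ = m - c is reflection about a₀
  have hL1 : ∀ x : ℤ, (x - (m - c)) % 2 = 0 → Φ x = 2 * (m - c) - x := by
    intro x hx
    rw [hΦ x]
    rcases hcc with ⟨h1, h2⟩ | ⟨h1, h2⟩ <;> by_cases hx2 : Even x
    · rw [if_pos hx2]; rw [Int.even_iff] at hx2; omega
    · rw [if_neg hx2]; rw [Int.not_even_iff] at hx2; omega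
    · rw [if_pos hx2]; rw [Int.even_iff] at hx2; omega
    · rw [if_neg hx2]; rw [Int.not_even_iff] at hx2; omega
  -- Φ on the parity class of a₁ = m + c - 1 is reflection about a₁ + 1
  have hL2 : ∀ x : ℤ, (x - (m - c)) % 2 = 1 → Φ x = 2 * (m + c) - x := by
    intro x hx
    rw [hΦ x]
    rcases hcc with ⟨h1, h2⟩ | ⟨h1, h2⟩ <;> by_cases hx2 : Even x
    · rw [if_pos hx2]; rw [Int.even_iff] at hx2; omega
    · rw [if_neg hx2]; rw [Int.not_even_iff] at hx2; omega
    · rw [if_pos hx2]; rw [Int.even_iff] at hx2; omega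
    · rw [if_neg hx2]; rw [Int.not_even_iff] at hx2; omega
  -- E b = -E a determines b = Φ a
  have hL3 : ∀ a b : ℤ, E b = -E a → b = Φ a := by
    intro a b hab
    rw [hE a, hE b] at hab
    rw [hΦ a]
    by_cases hA : Even a <;> by_cases hB : Even b
    · rw [if_pos hA] at hab ⊢; rw [if_pos hB] at hab; omega
    · rw [if_pos hA] at hab ⊢; rw [if_neg hB] at hab
      rw [Int.even_iff] at hA; rw [Int.not_even_iff] at hB; omega
    · rw [if_neg hA] at hab ⊢; rw [if_pos hB] at hab
      rw [Int.not_even_iff] at hA; rw [Int.even_iff] at hB; omega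
    · rw [if_neg hA] at hab ⊢; rw [if_neg hB] at hab; omega
  have hM1 : ∀ y ∈ S, y ≠ m + c - 1 → Φ y ∈ S := by
    intro y hy hne
    obtain ⟨b, hbS', hEb⟩ := hclose y hy hne
    rwa [hL3 y b hEb] at hbS'
  have hM2 : ∀ y ∈ S, 1 ≤ y ∧ y ≤ 2 * m := by
    intro y hy
    exact Finset.mem_Icc.mp (hsub hy)
  have hM3 : ∀ x y : ℤ, 1 ≤ x → x ≤ 2 * m → x + y = 2 * m + 1 → (x ∈ S ↔ y ∉ S) := by
    intro x y h1 h2 hs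
    exact hpair x y h1 h2 (by omega) (by omega) hs
  have ha1r := hM2 _ ha1S
  -- Step A : c ≤ m - 1
  have hcm : c ≤ m - 1 := by
    by_contra hA
    push_neg at hA
    have h1 : (1:ℤ) ∉ S := by
      intro h1S
      have h2 := hM1 1 h1S (by omega)
      rcases Int.emod_two_eq (1 - (m - c)) with hp | hp
      · rw [hL1 1 hp] at h2; have := hM2 _ h2; omega
      · rw [hL2 1 hp] at h2; have := hM2 _ h2; omega
    have h2m : 2 * m ∈ S := (hM3 (2 * m) 1 (by omega) (by omega) (by omega)).mpr h1
    have hcase : c = m ∨ c = m + 1 := by omega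
    rcases hcase with hcv | hcv
    · have h3 := hM1 (2 * m) h2m (by omega)
      rw [hL1 _ (by omega)] at h3
      have := hM2 _ h3; omega
    · have h2' : (2:ℤ) ∉ S := by
        intro h
        have h3 := hM1 2 h (by omega)
        rw [hL2 _ (by omega)] at h3
        have := hM2 _ h3; omega
      have h2m1 : 2 * m - 1 ∈ S := (hM3 (2 * m - 1) 2 (by omega) (by omega) (by omega)).mpr h2'
      have h3 := hM1 _ h2m1 (by omega)
      rw [hL1 _ (by omega)] at h3
      have := hM2 _ h3; omega
  -- Step B : a₀ ∈ S and m is even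
  have ha1p2 : m + c + 1 ∉ S := by
    have h1 := hL2 (m + c - 1) (by omega)
    rw [h1] at hPa1
    have h2 : 2 * (m + c) - (m + c - 1) = m + c + 1 := by ring
    rwa [h2] at hPa1
  have ha0S : m - c ∈ S :=
    (hM3 (m - c) (m + c + 1) (by omega) (by omega) (by omega)).mpr ha1p2
  have hme : m % 2 = 0 := Int.even_iff.mp (hbS.mp ha0S)
  -- Step C : 0 ≤ c
  have hc0 : 0 ≤ c := by
    by_contra hC
    push_neg at hC
    have hup : ∀ y ∈ S, (y - (m - c)) % 2 = 1 → y ≠ m + c - 1 → y ≤ 2 * m - 2 →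
        y + 2 ∈ S := by
      intro y hyS hyp hne hy2
      have hy1 := hM2 y hyS
      have hz : 2 * (m + c) - y ∈ S := by
        have h := hM1 y hyS hne
        rwa [hL2 y hyp] at h
      have hzr := hM2 _ hz
      have hw0 : 2 * m + 1 - (2 * (m + c) - y) ∉ S :=
        (hM3 (2 * (m + c) - y) (2 * m + 1 - (2 * (m + c) - y)) hzr.1 hzr.2 (by ring)).mp hz
      have hw : 2 * m - 1 - y ∉ S := by
        intro hwS
        have h := hM1 _ hwS (by omega)
        rw [hL1 _ (by omega)] at h
        have heq : 2 * (m - c) - (2 * m - 1 - y) = 2 * m + 1 - (2 * (m + c) - y) := by ring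
        rw [heq] at h
        exact hw0 h
      by_contra h
      exact hw ((hM3 (2 * m - 1 - y) (y + 2) (by omega) (by omega) (by omega)).mpr h)
    have hd1 : m - c + 2 ∉ S :=
      (hM3 (m + c - 1) (m - c + 2) ha1r.1 ha1r.2 (by ring)).mp ha1S
    have hd2 : m - c - 2 ∉ S := by
      intro h
      have h2 := hM1 _ h (by omega)
      rw [hL1 _ (by omega)] at h2
      have heq : 2 * (m - c) - (m - c - 2) = m - c + 2 := by ring
      rw [heq] at h2
      exact hd1 h2
    have hstart : m + c + 3 ∈ S := by
      by_contra h
      exact hd2 ((hM3 (m - c - 2) (m + c + 3) (by omega) (by omega) (by omega)).mpr h)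
    have hchainC : ∀ t : ℕ, m + c + 3 + 2 * (t:ℤ) ≤ 2 * m → m + c + 3 + 2 * (t:ℤ) ∈ S := by
      intro t
      induction t with
      | zero =>
        intro _
        have h0 : m + c + 3 + 2 * ((0:ℕ):ℤ) = m + c + 3 := by norm_num
        rw [h0]; exact hstart
      | succ n ih =>
        intro hbd
        have hcast : ((n + 1 : ℕ):ℤ) = (n:ℤ) + 1 := by push_cast; ring
        rw [hcast] at hbd ⊢
        have hyS := ih (by omega)
        have h2 := hup _ hyS (by omega) (by omega) (by omega)
        have heq : m + c + 3 + 2 * ((n:ℤ) + 1) = (m + c + 3 + 2 * (n:ℤ)) + 2 := by ring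
        rw [heq]; exact h2
    have ht0' : (((((m - c - 3) / 2).toNat : ℕ)):ℤ) = (m - c - 3) / 2 :=
      Int.toNat_of_nonneg (by omega)
    have hTS := hchainC ((m - c - 3) / 2).toNat (by omega)
    have h4 := hM1 _ hTS (by omega)
    rw [hL2 _ (by omega)] at h4
    have h5 := hM2 _ h4
    omega
  -- Step D : c ≤ 1
  have hc1 : c ≤ 1 := by
    by_contra hD
    push_neg at hD
    rcases Int.emod_two_eq c with hcp | hcp
    · have h1 : (1:ℤ) ∉ S := by
        intro h
        have h2 := hM1 1 h (by omega)
        rw [hL2 1 (by omega)] at h2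
        have := hM2 _ h2; omega
      have h2m : 2 * m ∈ S := (hM3 (2 * m) 1 (by omega) (by omega) (by omega)).mpr h1
      have h3 := hM1 _ h2m (by omega)
      rw [hL1 _ (by omega)] at h3
      have := hM2 _ h3; omega
    · have h2 : (2:ℤ) ∉ S := by
        intro h
        have h3 := hM1 2 h (by omega)
        rw [hL2 2 (by omega)] at h3
        have := hM2 _ h3; omega
      have h2m1 : 2 * m - 1 ∈ S := (hM3 (2 * m - 1) 2 (by omega) (by omega) (by omega)).mpr h2
      have h3 := hM1 _ h2m1 (by omega)
      rw [hL1 _ (by omega)] at h3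
      have := hM2 _ h3; omega
  -- Step E : the prefix bound at j = m / 2 is violated
  have hdown : ∀ y ∈ S, (y - (m - c)) % 2 = 1 → 2 * c + 2 ≤ y → y ≠ m + c + 3 →
      y - 2 ∈ S := by
    intro y hyS hyp hylo hyne
    have hyr := hM2 _ hyS
    have hns : 2 * m + 1 - y ∉ S := (hM3 y (2 * m + 1 - y) hyr.1 hyr.2 (by ring)).mp hyS
    have hw : y - 2 * c - 1 ∉ S := by
      intro h
      have h2 := hM1 _ h (by omega)
      rw [hL1 _ (by omega)] at h2
      have heq : 2 * (m - c) - (y - 2 * c - 1) = 2 * m + 1 - y := by ring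
      rw [heq] at h2
      exact hns h2
    have hz : 2 * m + 2 * c + 2 - y ∈ S := by
      by_contra h
      exact hw ((hM3 (y - 2 * c - 1) (2 * m + 2 * c + 2 - y) (by omega) (by omega)
        (by omega)).mpr h)
    have h3 := hM1 _ hz (by omega)
    rw [hL2 _ (by omega)] at h3
    have heq : 2 * (m + c) - (2 * m + 2 * c + 2 - y) = y - 2 := by ring
    rwa [heq] at h3
  have hch : ∀ t : ℕ, 1 + c ≤ m + c - 1 - 2 * (t:ℤ) → m + c - 1 - 2 * (t:ℤ) ∈ S := by
    intro t
    induction t with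
    | zero =>
      intro _
      have h0 : m + c - 1 - 2 * ((0:ℕ):ℤ) = m + c - 1 := by norm_num
      rw [h0]; exact ha1S
    | succ n ih =>
      intro hbd
      have hcast : ((n + 1 : ℕ):ℤ) = (n:ℤ) + 1 := by push_cast; ring
      rw [hcast] at hbd ⊢
      have hyS := ih (by omega)
      have h2 := hdown _ hyS (by omega) (by omega) (by omega)
      have heq : m + c - 1 - 2 * ((n:ℤ) + 1) = (m + c - 1 - 2 * (n:ℤ)) - 2 := by ring
      rw [heq]; exact h2
  have hmem : ∀ x : ℤ, 1 + c ≤ x → x ≤ m + c - 1 → (m + c - 1 - x) % 2 = 0 → x ∈ S := by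
    intro x h1 h2 h3
    have hcast : ((((m + c - 1 - x) / 2).toNat : ℕ):ℤ) = (m + c - 1 - x) / 2 :=
      Int.toNat_of_nonneg (by omega)
    have h4 := hch ((m + c - 1 - x) / 2).toNat (by omega)
    have heq : m + c - 1 - 2 * ((((m + c - 1 - x) / 2).toNat : ℕ):ℤ) = x := by omega
    rwa [heq] at h4
  have hj1 : 1 ≤ m / 2 := by omega
  have hkey := hpre (m / 2) hj1 (by omega)
  have hnm : m - c ∉ (Finset.Icc 1 (m / 2)).image (fun i : ℤ => 2 * i - 1 + c) := by
    intro h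
    obtain ⟨i, hi, hieq⟩ := Finset.mem_image.mp h
    rw [Finset.mem_Icc] at hi
    omega
  have hinj : Function.Injective (fun i : ℤ => 2 * i - 1 + c) := by
    intro a b h
    dsimp only at h
    omega
  have hTsub : insert (m - c) ((Finset.Icc 1 (m / 2)).image (fun i : ℤ => 2 * i - 1 + c)) ⊆
      S ∩ Finset.Icc 1 (2 * (m / 2)) := by
    intro x hx
    rcases Finset.mem_insert.mp hx with rfl | hx'
    · exact Finset.mem_inter.mpr ⟨ha0S, Finset.mem_Icc.mpr (by omega)⟩
    · obtain ⟨i, hi, rfl⟩ := Finset.mem_image.mp hx'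
      rw [Finset.mem_Icc] at hi
      exact Finset.mem_inter.mpr
        ⟨hmem _ (by omega) (by omega) (by omega), Finset.mem_Icc.mpr (by omega)⟩
  have hcard : (((insert (m - c)
      ((Finset.Icc 1 (m / 2)).image (fun i : ℤ => 2 * i - 1 + c))).card : ℤ)) = m / 2 + 1 := by
    rw [Finset.card_insert_of_notMem hnm, Finset.card_image_of_injective _ hinj,
      Int.card_Icc]
    omega
  have hle := Finset.card_le_card hTsub
  omega
end

section
/- With m ≥ 2, k integers, E(a) = m − (−1)^a k − a, Φ(a) = 2m − 2(−1)^a k − a, a_1 = m + (−1)^{m+k}k − 1: if S ⊆ {1,...,2m} satisfies conditions (a)–(e) of the combinatorial non-existence theorem, then |S| = m ≥ 3, |k| ≤ m − 1, and Φ maps S \ {a_1} bijectively onto itself. -/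
/-- With `m ≥ 2`, `k` integers, `E a = m - (-1)^a k - a`, `Φ a = 2m - 2(-1)^a k - a`,
`a₁ = m + (-1)^(m+k) k - 1`, `a₀ = m - (-1)^(m+k) k`: if `S ⊆ {1, ..., 2m}` satisfies
conditions (a)–(e) of the combinatorial non-existence theorem, then `|S| = m ≥ 3`,
`|k| ≤ m - 1`, and `Φ` maps `S \ {a₁}` bijectively onto itself. -/
theorem combinatorial_selector_properties
    (m k : ℤ) (hm : 2 ≤ m)
    (E Φ : ℤ → ℤ)
    (hE : ∀ a, E a = m - (if Even a then k else -k) - a)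
    (hΦ : ∀ a, Φ a = 2 * m - (if Even a then 2 * k else -(2 * k)) - a)
    (a₀ a₁ : ℤ)
    (ha₁ : a₁ = m + (if Even (m + k) then k else -k) - 1)
    (ha₀ : a₀ = m - (if Even (m + k) then k else -k))
    (S : Finset ℤ) (hsub : S ⊆ Finset.Icc 1 (2 * m))
    (hA : a₁ ∈ S ∧ Φ a₁ ∉ S)
    (hB : a₀ ∈ S ↔ Even m)
    (hC : ∀ a b : ℤ, 1 ≤ a → a ≤ 2 * m → 1 ≤ b → b ≤ 2 * m → a + b = 2 * m + 1 →
      (a ∈ S ↔ b ∉ S))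
    (hD : ∀ a ∈ S, a ≠ a₁ → ∃ b ∈ S, E b = -E a)
    (hEcard : ∀ j : ℤ, 1 ≤ j → j ≤ m →
      ((S ∩ Finset.Icc 1 (2 * j)).card : ℤ) ≤ j) :
    (S.card : ℤ) = m ∧ 3 ≤ m ∧ |k| ≤ m - 1 ∧
      Set.BijOn Φ ↑(S.erase a₁) ↑(S.erase a₁) := by
  have hmem : ∀ x ∈ S, 1 ≤ x ∧ x ≤ 2 * m := by
    intro x hx
    have := hsub hx
    rwa [Finset.mem_Icc] at this
  -- parity of Φ a matches parity of a
  have hpar : ∀ a, (Even (Φ a) ↔ Even a) := by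
    intro a
    by_cases h : Even a
    · rw [hΦ, if_pos h]
      simp only [Int.even_iff]
      omega
    · rw [hΦ, if_neg h]
      simp only [Int.even_iff]
      omega
  -- Φ is an involution
  have hinv : ∀ a, Φ (Φ a) = a := by
    intro a
    by_cases h : Even a
    · have h' : Even (Φ a) := (hpar a).mpr h
      rw [hΦ (Φ a), if_pos h', hΦ a, if_pos h]; ring
    · have h' : ¬ Even (Φ a) := fun hh => h ((hpar a).mp hh)
      rw [hΦ (Φ a), if_neg h', hΦ a, if_neg h]; ring
  -- uniqueness: E b = -E a forces b = Φ a
  have key : ∀ a b : ℤ, E b = -E a → b = Φ a := by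
    intro a b hEb
    rw [hE b, hE a] at hEb
    rw [hΦ]
    by_cases h1 : Even a <;> by_cases h2 : Even b
    · rw [if_pos h1] at hEb ⊢; rw [if_pos h2] at hEb; omega
    · exfalso
      rw [if_pos h1, if_neg h2] at hEb
      rw [Int.even_iff] at h1
      rw [Int.not_even_iff] at h2
      omega
    · exfalso
      rw [if_neg h1, if_pos h2] at hEb
      rw [Int.not_even_iff] at h1
      rw [Int.even_iff] at h2
      omega
    · rw [if_neg h1] at hEb ⊢; rw [if_neg h2] at hEb; omega
  -- Φ maps S \ {a₁} to itself
  have hmapsto : ∀ a ∈ S, a ≠ a₁ → Φ a ∈ S ∧ Φ a ≠ a₁ := by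
    intro a haS hne
    obtain ⟨b, hbS, hEb⟩ := hD a haS hne
    have hb := key a b hEb
    subst hb
    refine ⟨hbS, fun h => hA.2 ?_⟩
    have h2 : Φ a₁ = a := by rw [← h, hinv]
    rw [h2]; exact haS
  -- cardinality: |S| = m
  have hcard : (S.card : ℤ) = m := by
    have himg : (S.image (fun a => 2 * m + 1 - a)).card = S.card :=
      Finset.card_image_of_injOn (fun x _ y _ h => by omega)
    have hdisj : Disjoint S (S.image (fun a => 2 * m + 1 - a)) := by
      rw [Finset.disjoint_left]
      intro x hxS hximg
      rw [Finset.mem_image] at hximg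
      obtain ⟨a, haS, hax⟩ := hximg
      have h1 := hmem a haS
      have h2 := hmem x hxS
      exact (hC a x h1.1 h1.2 h2.1 h2.2 (by omega)).mp haS hxS
    have hunion : S ∪ S.image (fun a => 2 * m + 1 - a) = Finset.Icc 1 (2 * m) := by
      apply Finset.Subset.antisymm
      · intro x hx
        rcases Finset.mem_union.mp hx with h | h
        · exact hsub h
        · rw [Finset.mem_image] at h
          obtain ⟨a, haS, hax⟩ := h
          have := hmem a haS
          rw [Finset.mem_Icc]; omega
      · intro x hx
        rw [Finset.mem_Icc] at hx
        by_cases hxS : x ∈ S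
        · exact Finset.mem_union_left _ hxS
        · refine Finset.mem_union_right _ ?_
          rw [Finset.mem_image]
          exact ⟨2 * m + 1 - x,
            (hC (2 * m + 1 - x) x (by omega) (by omega) hx.1 hx.2 (by omega)).mpr hxS,
            by omega⟩
    have hcu := Finset.card_union_of_disjoint hdisj
    rw [hunion, himg, Int.card_Icc] at hcu
    omega
  -- extract the signed k value s
  obtain ⟨s, hsk, hsa₁, hsa₀⟩ :
      ∃ s : ℤ, ((s = k ∧ (m + k) % 2 = 0) ∨ (s = -k ∧ (m + k) % 2 = 1)) ∧
        a₁ = m + s - 1 ∧ a₀ = m - s := by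
    by_cases hmk : Even (m + k)
    · exact ⟨k, Or.inl ⟨rfl, Int.even_iff.mp hmk⟩,
        by rw [ha₁, if_pos hmk], by rw [ha₀, if_pos hmk]⟩
    · exact ⟨-k, Or.inr ⟨rfl, Int.not_even_iff.mp hmk⟩,
        by rw [ha₁, if_neg hmk], by rw [ha₀, if_neg hmk]⟩
  have hc1 := hmem a₁ hA.1
  -- upper bound s ≤ m - 1
  have hub : s ≤ m - 1 := by
    by_contra hgt
    push_neg at hgt
    have hne : (S.erase a₁).Nonempty :=
      Finset.card_pos.mp (by rw [Finset.card_erase_of_mem hA.1]; omega)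
    obtain ⟨a, haE⟩ := hne
    have haS := Finset.mem_of_mem_erase haE
    have hΦa := (hmapsto a haS (Finset.ne_of_mem_erase haE)).1
    have h1 := hmem a haS
    have h2 := hmem (Φ a) hΦa
    by_cases hpa : Even a
    · have hv : Φ a = 2 * m - 2 * k - a := by rw [hΦ, if_pos hpa]
      have e1 := Int.even_iff.mp hpa
      rcases hsk with ⟨h, h'⟩ | ⟨h, h'⟩ <;> omega
    · have hv : Φ a = 2 * m - -(2 * k) - a := by rw [hΦ, if_neg hpa]
      have e1 := Int.not_even_iff.mp hpa
      rcases hsk with ⟨h, h'⟩ | ⟨h, h'⟩ <;> omega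
  have hlb : 2 - m ≤ s := by omega
  have habs : |k| ≤ m - 1 := by
    rw [abs_le]
    rcases hsk with ⟨h, _⟩ | ⟨h, _⟩ <;> constructor <;> omega
  -- m ≥ 3
  have hm3 : 3 ≤ m := by
    by_contra hlt
    push_neg at hlt
    have hmeven : Even m := ⟨1, by omega⟩
    have ha₀S := hB.mpr hmeven
    have h0 := hmem a₀ ha₀S
    have hne01 : a₀ ≠ a₁ := by omega
    have hpair : ({a₀, a₁} : Finset ℤ) ⊆ S ∩ Finset.Icc 1 (2 * 1) := by
      intro x hx
      rw [Finset.mem_insert, Finset.mem_singleton] at hx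
      rw [Finset.mem_inter, Finset.mem_Icc]
      rcases hx with rfl | rfl
      · exact ⟨ha₀S, by omega⟩
      · exact ⟨hA.1, by omega⟩
    have hle := Finset.card_le_card hpair
    rw [Finset.card_pair hne01] at hle
    have := hEcard 1 (by norm_num) (by omega)
    omega
  refine ⟨hcard, hm3, habs, ?_, ?_, ?_⟩
  · intro a ha
    rw [Finset.mem_coe, Finset.mem_erase] at ha ⊢
    obtain ⟨hne, haS⟩ := ha
    obtain ⟨h1, h2⟩ := hmapsto a haS hne
    exact ⟨h2, h1⟩
  · intro x _ y _ hxy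
    have h := congrArg Φ hxy
    rwa [hinv, hinv] at h
  · intro b hb
    refine ⟨Φ b, ?_, hinv b⟩
    rw [Finset.mem_coe, Finset.mem_erase] at hb ⊢
    obtain ⟨hne, hbS⟩ := hb
    obtain ⟨h1, h2⟩ := hmapsto b hbS hne
    exact ⟨h2, h1⟩
end
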